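/- arXiv:0712.1707 — 5 statements merged into one kernel-verified Lean document; each statement's English description precedes it below -/
import Mathlib

section
/- Fix a vertex X and set 𝒳_X = {X' ∈ 𝒳 : f_0(X') ≥ f_0(X)} and 𝒟⁺_X = {Δ ∈ 𝒟⁺ : f_0(X(Δ)) ≥ f_0(X)}. Define θ(X',Δ) = 1 if Δ ⊆ C⁺_{X'} and 0 otherwise, and ν(Δ,X'') = (−1)^{|ℋ(Δ,Δ_{X''})|} if X'' lies in the closure of Δ and 0 otherwise. Then for all vertices X', X'' ∈ 𝒳_X, the sum Σ_{Δ ∈ 𝒟⁺_X} θ(X',Δ) · ν(Δ,X'') equals 1 if X' = X'' and 0 if X' ≠ X''; that is, the matrices (θ(X',Δ)) and (ν(Δ,X'')) indexed by 𝒳_X and 𝒟⁺_X are inverse to each other. -/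
open Set MeasureTheory Filter
open scoped Classical Real

noncomputable section

namespace HypArr

variable {k N : ℕ}

/-- The hyperplane `H j = f j ⁻¹ (0)` of the `j`-th affine form. -/
def Hyp (f : Fin N → ((Fin k → ℝ) →ᵃ[ℝ] ℝ)) (j : Fin N) : Set (Fin k → ℝ) :=
  {x | f j x = 0}

/-- The complement `ℝ^k ∖ (H 1 ∪ ⋯ ∪ H N)` of the union of all the hyperplanes. -/
def HypCompl (f : Fin N → ((Fin k → ℝ) →ᵃ[ℝ] ℝ)) : Set (Fin k → ℝ) :=
  {x | ∀ j, f j x ≠ 0}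

/-- `Δ` is an arrangement domain: a connected component of `ℝ^k ∖ (H 1 ∪ ⋯ ∪ H N)`. -/
def IsDomain (f : Fin N → ((Fin k → ℝ) →ᵃ[ℝ] ℝ)) (Δ : Set (Fin k → ℝ)) : Prop :=
  ∃ x ∈ HypCompl f, Δ = connectedComponentIn (HypCompl f) x

/-- The hyperplanes `H 1, …, H N` are in generic position in `ℝ^k`: they are pairwise
distinct, any `k` of them intersect in exactly one point, and any `k+1` of them have
empty intersection. -/
def Generic (f : Fin N → ((Fin k → ℝ) →ᵃ[ℝ] ℝ)) : Prop :=
  (∀ i j : Fin N, i ≠ j → Hyp f i ≠ Hyp f j) ∧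
  (∀ S : Finset (Fin N), S.card = k → ∃! x : Fin k → ℝ, ∀ j ∈ S, f j x = 0) ∧
  (∀ S : Finset (Fin N), S.card = k + 1 → ¬ ∃ x : Fin k → ℝ, ∀ j ∈ S, f j x = 0)

/-- `X` is a vertex of the arrangement. -/
def IsVertex (f : Fin N → ((Fin k → ℝ) →ᵃ[ℝ] ℝ)) (X : Fin k → ℝ) : Prop :=
  ∃ S : Finset (Fin N), S.card = k ∧ ∀ j ∈ S, f j X = 0

/-- `X` is the vertex of the arrangement with index set `S`. -/
def IsVertexOf (f : Fin N → ((Fin k → ℝ) →ᵃ[ℝ] ℝ)) (S : Finset (Fin N))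
    (X : Fin k → ℝ) : Prop :=
  S.card = k ∧ ∀ j ∈ S, f j X = 0

/-- The linear form `f0` is in general position with respect to the arrangement:
it takes pairwise distinct values at the vertices and is nonconstant on each
line `L_U = ∩_{j ∈ U} H j` for `U` of cardinality `k - 1`. -/
def GenericLin (f : Fin N → ((Fin k → ℝ) →ᵃ[ℝ] ℝ)) (f0 : (Fin k → ℝ) →ₗ[ℝ] ℝ) : Prop :=
  (∀ X Y : Fin k → ℝ, IsVertex f X → IsVertex f Y → X ≠ Y → f0 X ≠ f0 Y) ∧
  ∀ U : Finset (Fin N), U.card = k - 1 →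
    ∃ x y : Fin k → ℝ, (∀ j ∈ U, f j x = 0) ∧ (∀ j ∈ U, f j y = 0) ∧ f0 x ≠ f0 y

/-- `C` is a connected component of `ℝ^k ∖ ⋃_{j ∈ S} H j`. -/
def IsConeComp (f : Fin N → ((Fin k → ℝ) →ᵃ[ℝ] ℝ)) (S : Finset (Fin N))
    (C : Set (Fin k → ℝ)) : Prop :=
  ∃ y, (∀ j ∈ S, f j y ≠ 0) ∧ C = connectedComponentIn {z | ∀ j ∈ S, f j z ≠ 0} y

/-- `C` is the cone `C⁺_X` of the vertex `X` with index set `S`: the unique connected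
component of `ℝ^k ∖ ⋃_{j ∈ S} H j` on which `f0 - f0 X` is everywhere positive. -/
def IsPosCone (f : Fin N → ((Fin k → ℝ) →ᵃ[ℝ] ℝ)) (f0 : (Fin k → ℝ) →ₗ[ℝ] ℝ)
    (S : Finset (Fin N)) (X : Fin k → ℝ) (C : Set (Fin k → ℝ)) : Prop :=
  IsConeComp f S C ∧ ∀ y ∈ C, f0 X < f0 y

/-- `C` is the cone `C⁻_X` of the vertex `X` with index set `S`: the unique connected
component of `ℝ^k ∖ ⋃_{j ∈ S} H j` on which `f0 - f0 X` is everywhere negative. -/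
def IsNegCone (f : Fin N → ((Fin k → ℝ) →ᵃ[ℝ] ℝ)) (f0 : (Fin k → ℝ) →ₗ[ℝ] ℝ)
    (S : Finset (Fin N)) (X : Fin k → ℝ) (C : Set (Fin k → ℝ)) : Prop :=
  IsConeComp f S C ∧ ∀ y ∈ C, f0 y < f0 X

/-- `Δ` is the domain `Δ_X` of the vertex `X`: the unique arrangement domain whose
closure contains `X` and on which `f0 - f0 X > 0`. -/
def IsDomOf (f : Fin N → ((Fin k → ℝ) →ᵃ[ℝ] ℝ)) (f0 : (Fin k → ℝ) →ₗ[ℝ] ℝ)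
    (X : Fin k → ℝ) (Δ : Set (Fin k → ℝ)) : Prop :=
  IsDomain f Δ ∧ X ∈ closure Δ ∧ ∀ y ∈ Δ, f0 X < f0 y

/-- `Δ` is the domain `Δ⁻_X` of the vertex `X`: the unique arrangement domain whose
closure contains `X` and on which `f0 - f0 X < 0`. -/
def IsNegDomOf (f : Fin N → ((Fin k → ℝ) →ᵃ[ℝ] ℝ)) (f0 : (Fin k → ℝ) →ₗ[ℝ] ℝ)
    (X : Fin k → ℝ) (Δ : Set (Fin k → ℝ)) : Prop :=
  IsDomain f Δ ∧ X ∈ closure Δ ∧ ∀ y ∈ Δ, f0 y < f0 X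

/-- `Δ` belongs to `𝒟⁺`: it is an arrangement domain on which `f0` is bounded
from below. -/
def MemDplus (f : Fin N → ((Fin k → ℝ) →ᵃ[ℝ] ℝ)) (f0 : (Fin k → ℝ) →ₗ[ℝ] ℝ)
    (Δ : Set (Fin k → ℝ)) : Prop :=
  IsDomain f Δ ∧ BddBelow (f0 '' Δ)

/-- `Δ` belongs to `𝒟⁻`: it is an arrangement domain on which `f0` is bounded
from above. -/
def MemDminus (f : Fin N → ((Fin k → ℝ) →ᵃ[ℝ] ℝ)) (f0 : (Fin k → ℝ) →ₗ[ℝ] ℝ)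
    (Δ : Set (Fin k → ℝ)) : Prop :=
  IsDomain f Δ ∧ BddAbove (f0 '' Δ)

/-- The set `W` (a hyperplane) separates `S` from `T`: they lie in different connected
components of the complement of `W`. -/
def Separates {α : Type*} [TopologicalSpace α] (W S T : Set α) : Prop :=
  ∃ x ∈ S, ∃ y ∈ T, S ⊆ connectedComponentIn Wᶜ x ∧ T ⊆ connectedComponentIn Wᶜ y ∧
    connectedComponentIn Wᶜ x ≠ connectedComponentIn Wᶜ y

/-- The index set of `ℋ(Δ, Δ')`, the set of hyperplanes separating `Δ` from `Δ'`. -/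
def SepSet (f : Fin N → ((Fin k → ℝ) →ᵃ[ℝ] ℝ)) (Δ Δ' : Set (Fin k → ℝ)) :
    Finset (Fin N) :=
  Finset.univ.filter fun j => Separates (Hyp f j) Δ Δ'


/-! ### Auxiliary machinery for Statement 5 -/

section Aux

open scoped Topology

private lemma sgn_self {a : ℝ} (h : a ≠ 0) : 0 < a * a := mul_self_pos.2 h

private lemma s_pp {a b c : ℝ} (h1 : 0 < a * b) (h2 : 0 < b * c) : 0 < a * c := by
  have hb : b ≠ 0 := by rintro rfl; simp at h1
  nlinarith [mul_pos h1 h2, mul_self_pos.2 hb]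

private lemma s_pn {a b c : ℝ} (h1 : 0 < a * b) (h2 : b * c < 0) : a * c < 0 := by
  have hb : b ≠ 0 := by rintro rfl; simp at h1
  nlinarith [mul_self_pos.2 hb]

private lemma s_nn {a b c : ℝ} (h1 : a * b < 0) (h2 : b * c < 0) : 0 < a * c := by
  have hb : b ≠ 0 := by rintro rfl; simp at h1
  nlinarith [mul_pos_of_neg_of_neg h1 h2, mul_self_pos.2 hb]

private lemma s_np {a b c : ℝ} (h1 : a * b < 0) (h2 : 0 < b * c) : a * c < 0 := by
  have hb : b ≠ 0 := by rintro rfl; simp at h1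
  nlinarith [mul_self_pos.2 hb]

private lemma aff_cont {k : ℕ} (g : (Fin k → ℝ) →ᵃ[ℝ] ℝ) : Continuous g :=
  AffineMap.continuous_of_finiteDimensional g

/-- The component of the complement of a family of hyperplanes is the sign cell. -/
private lemma comp_eq {k : ℕ} {ι : Type*} (g : ι → ((Fin k → ℝ) →ᵃ[ℝ] ℝ)) (x : Fin k → ℝ)
    (hx : ∀ i, g i x ≠ 0) :
    connectedComponentIn {z | ∀ i, g i z ≠ 0} x = {z | ∀ i, 0 < g i x * g i z} := by
  apply subset_antisymm
  · intro z hz i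
    have hsub := connectedComponentIn_subset {z : Fin k → ℝ | ∀ i, g i z ≠ 0} x
    have hxm : x ∈ connectedComponentIn {z : Fin k → ℝ | ∀ i, g i z ≠ 0} x :=
      mem_connectedComponentIn hx
    have hpc : IsPreconnected (connectedComponentIn {z : Fin k → ℝ | ∀ i, g i z ≠ 0} x) :=
      isPreconnected_connectedComponentIn
    have hgz : g i z ≠ 0 := hsub hz i
    rcases lt_trichotomy (g i x * g i z) 0 with h | h | h
    · exfalso
      rcases mul_neg_iff.1 h with ⟨hpos, hneg⟩ | ⟨hneg, hpos⟩
      · obtain ⟨w, hw, hw0⟩ := hpc.intermediate_value₂ hz hxm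
          ((aff_cont (g i)).continuousOn) continuousOn_const hneg.le hpos.le
        exact hsub hw i hw0
      · obtain ⟨w, hw, hw0⟩ := hpc.intermediate_value₂ hxm hz
          ((aff_cont (g i)).continuousOn) continuousOn_const hneg.le hpos.le
        exact hsub hw i hw0
    · exact absurd h (mul_ne_zero (hx i) hgz)
    · exact h
  · have hconv : Convex ℝ {z : Fin k → ℝ | ∀ i, 0 < g i x * g i z} := by
      have : {z : Fin k → ℝ | ∀ i, 0 < g i x * g i z} = ⋂ i, (g i) ⁻¹' {w | 0 < g i x * w} := by
        ext z; simp [Set.mem_iInter]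
      rw [this]
      refine convex_iInter fun i => (Convex.affine_preimage (g i) ?_)
      intro w1 h1 w2 h2 a b ha hb hab
      simp only [Set.mem_setOf_eq] at *
      have : g i x * (a • w1 + b • w2) = a * (g i x * w1) + b * (g i x * w2) := by
        simp [smul_eq_mul]; ring
      rw [this]
      rcases eq_or_lt_of_le ha with h | h
      · simp [← h] at hab ⊢; nlinarith
      · nlinarith
    have hxc : x ∈ {z : Fin k → ℝ | ∀ i, 0 < g i x * g i z} := fun i => sgn_self (hx i)
    have hss : {z : Fin k → ℝ | ∀ i, 0 < g i x * g i z} ⊆ {z | ∀ i, g i z ≠ 0} := by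
      intro z hz i
      intro h0; have := hz i; rw [h0, mul_zero] at this; exact lt_irrefl 0 this
    exact hconv.isPreconnected.subset_connectedComponentIn hxc hss

variable {k N : ℕ}

/-- The full sign cell of a point. -/
def cellF (f : Fin N → ((Fin k → ℝ) →ᵃ[ℝ] ℝ)) (x : Fin k → ℝ) : Set (Fin k → ℝ) :=
  {z | ∀ j, 0 < f j x * f j z}

/-- The sign cell w.r.t. a subfamily. -/
def cellIn (f : Fin N → ((Fin k → ℝ) →ᵃ[ℝ] ℝ)) (S : Finset (Fin N)) (x : Fin k → ℝ) :
    Set (Fin k → ℝ) := {z | ∀ j ∈ S, 0 < f j x * f j z}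

lemma mem_cellF_self {f : Fin N → ((Fin k → ℝ) →ᵃ[ℝ] ℝ)} {x : Fin k → ℝ}
    (hx : ∀ i, f i x ≠ 0) : x ∈ cellF f x := fun i => sgn_self (hx i)

lemma cellF_ne_zero {f : Fin N → ((Fin k → ℝ) →ᵃ[ℝ] ℝ)} {x z : Fin k → ℝ}
    (hz : z ∈ cellF f x) (i : Fin N) : f i z ≠ 0 := by
  intro h0; have := hz i; rw [h0, mul_zero] at this; exact lt_irrefl 0 this

lemma comp_hypCompl {f : Fin N → ((Fin k → ℝ) →ᵃ[ℝ] ℝ)} {x : Fin k → ℝ}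
    (hx : ∀ i, f i x ≠ 0) :
    connectedComponentIn (HypCompl f) x = cellF f x := comp_eq f x hx

lemma isDomain_cellF {f : Fin N → ((Fin k → ℝ) →ᵃ[ℝ] ℝ)} {x : Fin k → ℝ}
    (hx : ∀ i, f i x ≠ 0) : IsDomain f (cellF f x) :=
  ⟨x, hx, (comp_hypCompl hx).symm⟩

lemma isDomain_iff_cell {f : Fin N → ((Fin k → ℝ) →ᵃ[ℝ] ℝ)} {Δ : Set (Fin k → ℝ)}
    (h : IsDomain f Δ) : ∃ p, (∀ i, f i p ≠ 0) ∧ Δ = cellF f p := by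
  obtain ⟨x, hx, rfl⟩ := h
  exact ⟨x, hx, comp_hypCompl hx⟩

lemma cone_eq_cell {f : Fin N → ((Fin k → ℝ) →ᵃ[ℝ] ℝ)} {S : Finset (Fin N)}
    {Cs : Set (Fin k → ℝ)} (h : IsConeComp f S Cs) :
    ∃ y, (∀ i ∈ S, f i y ≠ 0) ∧ Cs = cellIn f S y := by
  obtain ⟨y, hy, rfl⟩ := h
  refine ⟨y, hy, ?_⟩
  have h1 : {z : Fin k → ℝ | ∀ j ∈ S, f j z ≠ 0} = {z | ∀ i : S, f i.1 z ≠ 0} := by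
    ext z; simp
  have h2 : connectedComponentIn {z : Fin k → ℝ | ∀ i : S, f i.1 z ≠ 0} y
      = {z | ∀ i : S, 0 < f i.1 y * f i.1 z} :=
    comp_eq (fun i : S => f i.1) y (fun i => hy i.1 i.2)
  rw [h1, h2]; ext z; simp [cellIn]

lemma comp_half {f : Fin N → ((Fin k → ℝ) →ᵃ[ℝ] ℝ)} {j : Fin N} {x : Fin k → ℝ}
    (hx : f j x ≠ 0) :
    connectedComponentIn (Hyp f j)ᶜ x = {z | 0 < f j x * f j z} := by
  have h1 : (Hyp f j)ᶜ = {z : Fin k → ℝ | ∀ _ : Unit, f j z ≠ 0} := by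
    ext z; simp [Hyp]
  have h2 := comp_eq (fun _ : Unit => f j) x (fun _ => hx)
  rw [h1, h2]; ext z; simp

lemma cellF_eq_of_sign {f : Fin N → ((Fin k → ℝ) →ᵃ[ℝ] ℝ)} {p q : Fin k → ℝ}
    (h : ∀ i, 0 < f i p * f i q) : cellF f p = cellF f q := by
  ext z; constructor <;> intro hz i
  · exact s_pp (mul_comm (f i p) (f i q) ▸ h i) (hz i)
  · exact s_pp (h i) (hz i)

lemma separates_iff {f : Fin N → ((Fin k → ℝ) →ᵃ[ℝ] ℝ)} {p r : Fin k → ℝ}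
    (hp : ∀ i, f i p ≠ 0) (hr : ∀ i, f i r ≠ 0) (j : Fin N) :
    Separates (Hyp f j) (cellF f p) (cellF f r) ↔ f j p * f j r < 0 := by
  constructor
  · rintro ⟨x, hx, y, hy, hsx, hsy, hne⟩
    by_contra hge
    have hxj : f j x ≠ 0 := cellF_ne_zero hx j
    have hyj : f j y ≠ 0 := cellF_ne_zero hy j
    have hpr : 0 < f j p * f j r :=
      (mul_ne_zero (hp j) (hr j)).lt_or_gt.resolve_left hge
    have hxy : 0 < f j x * f j y := by
      have h1 : 0 < f j p * f j x := hx j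
      have h2 : 0 < f j r * f j y := hy j
      exact s_pp (s_pp (mul_comm (f j p) (f j x) ▸ h1) hpr) h2
    apply hne
    rw [comp_half hxj, comp_half hyj]
    ext z; constructor <;> intro hz
    · exact s_pp (mul_comm (f j x) (f j y) ▸ hxy) hz
    · exact s_pp hxy hz
  · intro hneg
    refine ⟨p, mem_cellF_self hp, r, mem_cellF_self hr, ?_, ?_, ?_⟩
    · rw [comp_half (hp j)]; intro z hz; exact hz j
    · rw [comp_half (hr j)]; intro z hz; exact hz j
    · rw [comp_half (hp j), comp_half (hr j)]
      intro heq
      have : r ∈ {z | 0 < f j p * f j z} := heq ▸ sgn_self (hr j)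
      exact absurd this (by simpa using hneg.le.not_gt ∘ fun h => h)

lemma sepSet_eq {f : Fin N → ((Fin k → ℝ) →ᵃ[ℝ] ℝ)} {p r : Fin k → ℝ}
    (hp : ∀ i, f i p ≠ 0) (hr : ∀ i, f i r ≠ 0) :
    SepSet f (cellF f p) (cellF f r) = Finset.univ.filter (fun j => f j p * f j r < 0) :=
  Finset.filter_congr fun j _ => separates_iff hp hr j

lemma not_separates_self {α : Type*} [TopologicalSpace α] (W S : Set α) :
    ¬ Separates W S S := by
  rintro ⟨x, hx, y, hy, hSx, hSy, hne⟩
  exact hne (connectedComponentIn_eq (hSx hy))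

lemma sepSet_self {f : Fin N → ((Fin k → ℝ) →ᵃ[ℝ] ℝ)} (Δ : Set (Fin k → ℝ)) :
    SepSet f Δ Δ = ∅ :=
  Finset.filter_eq_empty_iff.2 fun _ _ => not_separates_self _ _

lemma pow_card_filter (P : Fin N → Prop) :
    (-1 : ℝ) ^ (Finset.univ.filter P).card = ∏ j, (if P j then (-1 : ℝ) else 1) := by
  rw [← Finset.prod_filter P (fun _ => (-1 : ℝ))]
  simp [Finset.prod_const]

lemma pow_flip {j₀ : Fin N} {P P' : Fin N → Prop}
    (hiff : ∀ i, i ≠ j₀ → (P i ↔ P' i)) (hneg : P' j₀ ↔ ¬ P j₀) :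
    (-1 : ℝ) ^ (Finset.univ.filter P').card = -(-1 : ℝ) ^ (Finset.univ.filter P).card := by
  rw [pow_card_filter, pow_card_filter,
    ← Finset.mul_prod_erase Finset.univ _ (Finset.mem_univ j₀),
    ← Finset.mul_prod_erase Finset.univ _ (Finset.mem_univ j₀)]
  have h1 : ∏ x ∈ Finset.univ.erase j₀, (if P' x then (-1:ℝ) else 1)
      = ∏ x ∈ Finset.univ.erase j₀, (if P x then (-1:ℝ) else 1) :=
    Finset.prod_congr rfl fun i hi => by
      rw [if_congr (hiff i (Finset.ne_of_mem_erase hi)).symm rfl rfl]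
  rw [h1]
  have h2 : (if P' j₀ then (-1:ℝ) else 1) = -(if P j₀ then (-1:ℝ) else 1) := by
    by_cases h : P j₀
    · rw [if_pos h, if_neg (by simp [hneg, h])]; ring
    · rw [if_pos (hneg.2 h), if_neg h]
  rw [h2]; ring

lemma aff_add {k : ℕ} (g : (Fin k → ℝ) →ᵃ[ℝ] ℝ) (y v : Fin k → ℝ) :
    g (y + v) = g.linear v + g y := by
  simpa [add_comm] using g.map_vadd y v

/-- off-vertex hyperplanes do not vanish at the vertex -/
lemma vertex_offT {f : Fin N → ((Fin k → ℝ) →ᵃ[ℝ] ℝ)} (hf : Generic f)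
    {T : Finset (Fin N)} (hT : T.card = k)
    {y0 : Fin k → ℝ} (hy0 : ∀ j ∈ T, f j y0 = 0) {j : Fin N} (hj : j ∉ T) :
    f j y0 ≠ 0 := by
  intro h0
  exact hf.2.2 (insert j T) (by rw [Finset.card_insert_of_notMem hj, hT])
    ⟨y0, fun i hi => by
      rcases Finset.mem_insert.mp hi with rfl | hi
      · exact h0
      · exact hy0 i hi⟩

lemma vertex_unique {f : Fin N → ((Fin k → ℝ) →ᵃ[ℝ] ℝ)} (hf : Generic f)
    {T : Finset (Fin N)} (hT : T.card = k)
    {y0 z : Fin k → ℝ} (hy0 : ∀ j ∈ T, f j y0 = 0) (hz : ∀ j ∈ T, f j z = 0) :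
    z = y0 := by
  obtain ⟨xq, _, huniq⟩ := hf.2.1 T hT
  rw [huniq _ hz, huniq _ hy0]

lemma exists_W {f : Fin N → ((Fin k → ℝ) →ᵃ[ℝ] ℝ)} {f0 : (Fin k → ℝ) →ₗ[ℝ] ℝ}
    (hf : Generic f) (hf0 : GenericLin f f0) {T : Finset (Fin N)}
    (hT : T.card = k) {y0 : Fin k → ℝ} (hy0 : ∀ j ∈ T, f j y0 = 0) {j : Fin N}
    (hj : j ∈ T) :
    ∃ w, (∀ m ∈ T, m ≠ j → (f m).linear w = 0) ∧ (f j).linear w = 1 ∧ f0 w ≠ 0 := by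
  obtain ⟨x, y, hxU, hyU, hne⟩ := hf0.2 (T.erase j) (by rw [Finset.card_erase_of_mem hj, hT])
  set d := y - x with hd
  have hdlin : ∀ m ∈ T.erase j, (f m).linear d = 0 := by
    intro m hm
    have : (f m).linear (y -ᵥ x) = f m y -ᵥ f m x := (f m).linearMap_vsub y x
    simpa [hd, hxU m hm, hyU m hm] using this
  have hf0d : f0 d ≠ 0 := by
    simpa [hd, _root_.map_sub, sub_ne_zero] using sub_ne_zero.2 hne.symm
  set c := (f j).linear d with hc
  have hcne : c ≠ 0 := by
    intro h0
    have hz : ∀ m ∈ T, f m (y0 + d) = 0 := by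
      intro m hm
      rw [aff_add, hy0 m hm, add_zero]
      rcases eq_or_ne m j with rfl | hmj
      · rw [← hc]; exact h0
      · exact hdlin m (Finset.mem_erase.2 ⟨hmj, hm⟩)
    have h1 : y0 + d = y0 := vertex_unique hf hT hy0 hz
    have : d = 0 := by
      have h2 : y0 + d = y0 + 0 := by simpa using h1
      exact add_left_cancel h2
    exact hf0d (by rw [this, _root_.map_zero])
  refine ⟨c⁻¹ • d, ?_, ?_, ?_⟩
  · intro m hm hmj
    rw [_root_.map_smul, hdlin m (Finset.mem_erase.2 ⟨hmj, hm⟩), smul_zero]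
  · rw [_root_.map_smul, ← hc, smul_eq_mul, inv_mul_cancel₀ hcne]
  · rw [_root_.map_smul, smul_eq_mul]
    exact mul_ne_zero (inv_ne_zero hcne) hf0d

lemma closure_sign {f : Fin N → ((Fin k → ℝ) →ᵃ[ℝ] ℝ)} {x₀ y0 : Fin k → ℝ}
    (hy : y0 ∈ closure (cellF f x₀)) {i : Fin N} (hi : f i y0 ≠ 0) :
    0 < f i x₀ * f i y0 := by
  have hO : IsOpen {z : Fin k → ℝ | 0 < f i y0 * f i z} :=
    isOpen_lt continuous_const (continuous_const.mul (aff_cont (f i)))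
  have hy0O : y0 ∈ {z : Fin k → ℝ | 0 < f i y0 * f i z} := sgn_self hi
  obtain ⟨z, hzO, hzc⟩ := _root_.mem_closure_iff.mp hy _ hO hy0O
  have h1 : 0 < f i x₀ * f i z := hzc i
  have h2 : 0 < f i z * f i y0 := by
    have := hzO; rw [Set.mem_setOf_eq] at this; linarith [mul_comm (f i y0) (f i z)]
  exact s_pp h1 h2

private lemma pos_cancel {t x : ℝ} (ht : 0 < t) (h : 0 < t * x) : 0 < x := by
  by_contra hx
  push_neg at hx
  exact absurd h (not_lt.2 (mul_nonpos_of_nonneg_of_nonpos ht.le hx))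

private lemma nonneg_lim {A B : ℝ} (h : ∀ᶠ t in 𝓝[>] (0:ℝ), 0 < A + t * B) : 0 ≤ A := by
  have hcont : Continuous fun t : ℝ => A + t * B := by continuity
  have ht : Tendsto (fun t : ℝ => A + t * B) (𝓝[>] (0:ℝ)) (𝓝 A) := by
    have h0 := (hcont.tendsto 0).mono_left (nhdsWithin_le_nhds (s := Set.Ioi (0:ℝ)))
    simpa using h0
  exact ge_of_tendsto ht (h.mono fun t h => h.le)

section Curve
variable {f : Fin N → ((Fin k → ℝ) →ᵃ[ℝ] ℝ)} {f0 : (Fin k → ℝ) →ₗ[ℝ] ℝ}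
variable {T : Finset (Fin N)} {y0 : Fin k → ℝ} {W : Fin N → (Fin k → ℝ)}
variable {x₀ : Fin k → ℝ} {j : Fin N}

/-- values of the hyperplane forms along the curve `t ↦ y0 + t•a + t²•b`. -/
lemma curve_vals
    (hy0 : ∀ m ∈ T, f m y0 = 0)
    (hW : ∀ i ∈ T, (∀ m ∈ T, m ≠ i → (f m).linear (W i) = 0) ∧ (f i).linear (W i) = 1)
    (hj : j ∈ T) (t : ℝ) :
    (f j (y0 + (t • (f j x₀ • W j) + (t*t) • ∑ i ∈ T.erase j, f i x₀ • W i))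
        = t * f j x₀) ∧
    (∀ m ∈ T, m ≠ j →
      f m (y0 + (t • (f j x₀ • W j) + (t*t) • ∑ i ∈ T.erase j, f i x₀ • W i))
        = (t*t) * f m x₀) ∧
    (∀ g0 : (Fin k → ℝ) →ₗ[ℝ] ℝ,
      g0 (y0 + (t • (f j x₀ • W j) + (t*t) • ∑ i ∈ T.erase j, f i x₀ • W i))
        = g0 y0 + (t * (f j x₀ * g0 (W j))
            + (t*t) * ∑ i ∈ T.erase j, f i x₀ * g0 (W i))) := by
  set a := f j x₀ • W j with ha
  set b := ∑ i ∈ T.erase j, f i x₀ • W i with hb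
  have hlin : ∀ m : Fin N, (f m).linear (t • a + (t*t) • b)
      = t * ((f m).linear a) + (t*t) * ((f m).linear b) := by
    intro m; simp only [_root_.map_add, _root_.map_smul, smul_eq_mul]
  have hlina : ∀ m : Fin N, (f m).linear a = f j x₀ * (f m).linear (W j) := by
    intro m; rw [ha, _root_.map_smul, smul_eq_mul]
  have hlinb : ∀ m : Fin N, (f m).linear b = ∑ i ∈ T.erase j, f i x₀ * (f m).linear (W i) := by
    intro m; rw [hb, _root_.map_sum]; exact Finset.sum_congr rfl fun i _ => by rw [_root_.map_smul, smul_eq_mul]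
  refine ⟨?_, ?_, ?_⟩
  · rw [aff_add, hy0 j hj, add_zero, hlin, hlina, (hW j hj).2, mul_one, hlinb]
    have hz : ∑ i ∈ T.erase j, f i x₀ * (f j).linear (W i) = 0 := by
      apply Finset.sum_eq_zero
      intro i hi
      rw [(hW i (Finset.mem_of_mem_erase hi)).1 j hj (Finset.ne_of_mem_erase hi).symm, mul_zero]
    rw [hz, mul_zero, add_zero]
  · intro m hm hmj
    rw [aff_add, hy0 m hm, add_zero, hlin, hlina, (hW j hj).1 m hm hmj, mul_zero, mul_zero,
      zero_add, hlinb]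
    have hz : ∑ i ∈ T.erase j, f i x₀ * (f m).linear (W i) = f m x₀ := by
      rw [Finset.sum_eq_single_of_mem m (Finset.mem_erase.2 ⟨hmj, hm⟩)]
      · rw [(hW m hm).2, mul_one]
      · intro i hi him
        rw [(hW i (Finset.mem_of_mem_erase hi)).1 m hm (Ne.symm him), mul_zero]
    rw [hz]
  · intro g0
    have h1 : g0 (y0 + (t • a + (t*t) • b)) = g0 y0 + (t * g0 a + (t*t) * g0 b) := by
      simp only [_root_.map_add, _root_.map_smul, smul_eq_mul]
    have h2 : g0 a = f j x₀ * g0 (W j) := by rw [ha, _root_.map_smul, smul_eq_mul]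
    have h3 : g0 b = ∑ i ∈ T.erase j, f i x₀ * g0 (W i) := by
      rw [hb, _root_.map_sum]
      exact Finset.sum_congr rfl fun i _ => by rw [_root_.map_smul, smul_eq_mul]
    rw [h1, h2, h3]

/-- Forced sign: cone version. -/
lemma forced_sign_cone
    (hy0 : ∀ m ∈ T, f m y0 = 0)
    (hW : ∀ i ∈ T, (∀ m ∈ T, m ≠ i → (f m).linear (W i) = 0) ∧ (f i).linear (W i) = 1)
    (hWf0 : f0 (W j) ≠ 0)
    (hx₀ : ∀ i ∈ T, f i x₀ ≠ 0)
    (hpos : ∀ u ∈ cellIn f T x₀, f0 y0 < f0 u)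
    (hj : j ∈ T) :
    0 < f j x₀ * f0 (W j) := by
  set A := f j x₀ * f0 (W j) with hA
  set B := ∑ i ∈ T.erase j, f i x₀ * f0 (W i) with hB
  have hmem : ∀ t : ℝ, 0 < t →
      (y0 + (t • (f j x₀ • W j) + (t*t) • ∑ i ∈ T.erase j, f i x₀ • W i)) ∈ cellIn f T x₀ := by
    intro t ht m hm
    rcases eq_or_ne m j with rfl | hmj
    · rw [(curve_vals hy0 hW hj t).1]
      rw [show f m x₀ * (t * f m x₀) = t * (f m x₀ * f m x₀) by ring]
      exact mul_pos ht (sgn_self (hx₀ m hm))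
    · rw [(curve_vals hy0 hW hj t).2.1 m hm hmj]
      rw [show f m x₀ * ((t*t) * f m x₀) = (t*t) * (f m x₀ * f m x₀) by ring]
      exact mul_pos (mul_pos ht ht) (sgn_self (hx₀ m hm))
  have hAB : ∀ t : ℝ, 0 < t → 0 < A + t * B := by
    intro t ht
    have h1 := hpos _ (hmem t ht)
    rw [(curve_vals hy0 hW hj t).2.2 f0, ← hA, ← hB] at h1
    have h2 : 0 < t * (A + t * B) := by
      have heq : t * (A + t * B) = t * A + (t*t) * B := by ring
      rw [heq]; linarith
    exact pos_cancel ht h2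
  have hA0 : 0 ≤ A := nonneg_lim (by
    filter_upwards [self_mem_nhdsWithin] with t ht
    exact hAB t ht)
  have hAne : A ≠ 0 := mul_ne_zero (hx₀ j hj) hWf0
  exact lt_of_le_of_ne hA0 (Ne.symm hAne)

lemma forced_sign_dom
    (hy0 : ∀ m ∈ T, f m y0 = 0)
    (hW : ∀ i ∈ T, (∀ m ∈ T, m ≠ i → (f m).linear (W i) = 0) ∧ (f i).linear (W i) = 1)
    (hWf0 : f0 (W j) ≠ 0)
    (hx₀ : ∀ i, f i x₀ ≠ 0)
    (hoff : ∀ i ∉ T, 0 < f i x₀ * f i y0)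
    (hpos : ∀ u ∈ cellF f x₀, f0 y0 < f0 u)
    (hj : j ∈ T) :
    0 < f j x₀ * f0 (W j) := by
  set A := f j x₀ * f0 (W j) with hA
  set B := ∑ i ∈ T.erase j, f i x₀ * f0 (W i) with hB
  set z : ℝ → (Fin k → ℝ) :=
    fun t => y0 + (t • (f j x₀ • W j) + (t*t) • ∑ i ∈ T.erase j, f i x₀ • W i) with hz
  have hzcont : Continuous z := by
    apply continuous_const.add
    exact (continuous_id.smul continuous_const).add
      ((continuous_id.mul continuous_id).smul continuous_const)
  have hz0 : z 0 = y0 := by simp [hz]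
  have hmem_aux : ∀ i : Fin N, ∀ᶠ t in 𝓝[>] (0:ℝ), 0 < f i x₀ * f i (z t) := by
    intro i
    by_cases hiT : i ∈ T
    · filter_upwards [self_mem_nhdsWithin] with t ht
      rcases eq_or_ne i j with rfl | hij
      · rw [hz]
        rw [show (fun t : ℝ => y0 + (t • (f i x₀ • W i) + (t*t) • ∑ m ∈ T.erase i, f m x₀ • W m)) t
            = y0 + (t • (f i x₀ • W i) + (t*t) • ∑ m ∈ T.erase i, f m x₀ • W m) from rfl,
          (curve_vals hy0 hW hj t).1,
          show f i x₀ * (t * f i x₀) = t * (f i x₀ * f i x₀) by ring]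
        exact mul_pos ht (sgn_self (hx₀ i))
      · rw [hz]
        rw [show (fun t : ℝ => y0 + (t • (f j x₀ • W j) + (t*t) • ∑ m ∈ T.erase j, f m x₀ • W m)) t
            = y0 + (t • (f j x₀ • W j) + (t*t) • ∑ m ∈ T.erase j, f m x₀ • W m) from rfl,
          (curve_vals hy0 hW hj t).2.1 i hiT hij,
          show f i x₀ * ((t*t) * f i x₀) = (t*t) * (f i x₀ * f i x₀) by ring]
        exact mul_pos (mul_pos ht ht) (sgn_self (hx₀ i))
    · have hct : ContinuousAt (fun t : ℝ => f i x₀ * f i (z t)) 0 :=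
        (continuous_const.mul ((aff_cont (f i)).comp hzcont)).continuousAt
      have hval : (0:ℝ) < f i x₀ * f i (z 0) := by rw [hz0]; exact hoff i hiT
      exact (hct.eventually (eventually_gt_nhds hval)).filter_mono nhdsWithin_le_nhds
  have hmem : ∀ᶠ t in 𝓝[>] (0:ℝ), z t ∈ cellF f x₀ := by
    have h := eventually_all.2 hmem_aux
    exact h
  have hAB : ∀ᶠ t in 𝓝[>] (0:ℝ), 0 < A + t * B := by
    filter_upwards [hmem, self_mem_nhdsWithin] with t hm ht
    have h1 := hpos _ hm
    rw [hz] at h1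
    rw [show (fun t : ℝ => y0 + (t • (f j x₀ • W j) + (t*t) • ∑ m ∈ T.erase j, f m x₀ • W m)) t
        = y0 + (t • (f j x₀ • W j) + (t*t) • ∑ m ∈ T.erase j, f m x₀ • W m) from rfl,
      (curve_vals hy0 hW hj t).2.2 f0, ← hA, ← hB] at h1
    have h2 : 0 < t * (A + t * B) := by
      have heq : t * (A + t * B) = t * A + (t*t) * B := by ring
      rw [heq]; linarith
    exact pos_cancel ht h2
  exact lt_of_le_of_ne (nonneg_lim hAB) (Ne.symm (mul_ne_zero (hx₀ j) hWf0))

/-- realize any sign pattern at the vertex, adjacent to it. -/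
lemma adj_point
    (hy0 : ∀ m ∈ T, f m y0 = 0)
    (hW : ∀ i ∈ T, (∀ m ∈ T, m ≠ i → (f m).linear (W i) = 0) ∧ (f i).linear (W i) = 1)
    (hoff : ∀ i ∉ T, f i y0 ≠ 0)
    (s : Fin N → ℝ) (hs : ∀ i ∈ T, s i ≠ 0) :
    ∃ p, (∀ i ∈ T, 0 < s i * f i p) ∧ (∀ i ∉ T, 0 < f i y0 * f i p) ∧
      (∀ i, f i p ≠ 0) ∧ y0 ∈ closure (cellF f p) := by
  set v := ∑ i ∈ T, s i • W i with hv
  set q : ℝ → (Fin k → ℝ) := fun t => y0 + t • v with hq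
  have hqcont : Continuous q := continuous_const.add (continuous_id.smul continuous_const)
  have hq0 : q 0 = y0 := by simp [hq]
  have hvalT : ∀ m ∈ T, ∀ t : ℝ, f m (q t) = t * s m := by
    intro m hm t
    have hqt : q t = y0 + t • v := rfl
    rw [hqt, aff_add, hy0 m hm, add_zero, _root_.map_smul, smul_eq_mul, hv, _root_.map_sum]
    have : ∑ i ∈ T, (f m).linear (s i • W i) = s m := by
      rw [Finset.sum_eq_single_of_mem m hm]
      · rw [_root_.map_smul, (hW m hm).2, smul_eq_mul, mul_one]
      · intro i hi him
        rw [_root_.map_smul, (hW i hi).1 m hm (Ne.symm him), smul_zero]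
    rw [this]
  have hoffEv : ∀ i : Fin N, ∀ᶠ t in 𝓝[>] (0:ℝ), i ∉ T → 0 < f i y0 * f i (q t) := by
    intro i
    by_cases hiT : i ∈ T
    · filter_upwards with t h; exact absurd hiT h
    · have hct : ContinuousAt (fun t : ℝ => f i y0 * f i (q t)) 0 :=
        (continuous_const.mul ((aff_cont (f i)).comp hqcont)).continuousAt
      have hval : (0:ℝ) < f i y0 * f i (q 0) := by rw [hq0]; exact sgn_self (hoff i hiT)
      exact ((hct.eventually (eventually_gt_nhds hval)).filter_mono
        nhdsWithin_le_nhds).mono fun t h _ => h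
  obtain ⟨t₁, ht₁off, ht₁pos⟩ := ((eventually_all.2 hoffEv).and self_mem_nhdsWithin).exists
  have ht₁ : (0:ℝ) < t₁ := ht₁pos
  refine ⟨q t₁, ?_, ?_, ?_, ?_⟩
  · intro i hi
    rw [hvalT i hi t₁, show s i * (t₁ * s i) = t₁ * (s i * s i) by ring]
    exact mul_pos ht₁ (sgn_self (hs i hi))
  · intro i hi; exact ht₁off i hi
  · intro i
    by_cases hiT : i ∈ T
    · rw [hvalT i hiT t₁]; exact mul_ne_zero (ne_of_gt ht₁) (hs i hiT)
    · intro h0; have := ht₁off i hiT; rw [h0, mul_zero] at this; exact lt_irrefl 0 this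
  · apply mem_closure_of_tendsto (x := y0) (f := q) (b := 𝓝[>] (0:ℝ))
    · rw [← hq0]
      exact (hqcont.tendsto 0).mono_left nhdsWithin_le_nhds
    · have haux : ∀ i : Fin N, ∀ᶠ t in 𝓝[>] (0:ℝ), 0 < f i (q t₁) * f i (q t) := by
        intro i
        by_cases hiT : i ∈ T
        · filter_upwards [self_mem_nhdsWithin] with t ht
          rw [hvalT i hiT, hvalT i hiT,
            show t₁ * s i * (t * s i) = (t₁ * t) * (s i * s i) by ring]
          exact mul_pos (mul_pos ht₁ ht) (sgn_self (hs i hiT))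
        · filter_upwards [eventually_all.2 hoffEv] with t hoT
          have h1 : 0 < f i y0 * f i (q t) := hoT i hiT
          have h2 : 0 < f i (q t₁) * f i y0 := by
            have := ht₁off i hiT; linarith [mul_comm (f i y0) (f i (q t₁))]
          exact s_pp h2 h1
      exact eventually_all.2 haux

end Curve

/-- The "flip one hyperplane" operation on subsets. -/
def flipSet (f : Fin N → ((Fin k → ℝ) →ᵃ[ℝ] ℝ)) (j₀ : Fin N) (Δ : Set (Fin k → ℝ)) :
    Set (Fin k → ℝ) :=
  {z | ∀ w ∈ Δ, f j₀ w * f j₀ z < 0 ∧ ∀ i, i ≠ j₀ → 0 < f i w * f i z}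

lemma flip_eq {f : Fin N → ((Fin k → ℝ) →ᵃ[ℝ] ℝ)} {j₀ : Fin N} {q p' : Fin k → ℝ}
    (hq : ∀ i, f i q ≠ 0) (hflip : f j₀ q * f j₀ p' < 0)
    (hsame : ∀ i, i ≠ j₀ → 0 < f i q * f i p') :
    flipSet f j₀ (cellF f q) = cellF f p' := by
  ext z
  constructor
  · intro hz i
    obtain ⟨hn, hrest⟩ := hz q (mem_cellF_self hq)
    rcases eq_or_ne i j₀ with rfl | hij
    · exact s_nn (mul_comm (f i q) (f i p') ▸ hflip) hn
    · exact s_pp (mul_comm (f i q) (f i p') ▸ hsame i hij) (hrest i hij)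
  · intro hz w hw
    constructor
    · have h1 : 0 < f j₀ w * f j₀ q := mul_comm (f j₀ q) (f j₀ w) ▸ hw j₀
      exact s_np (s_pn h1 hflip) (hz j₀)
    · intro i hij
      have h1 : 0 < f i w * f i q := mul_comm (f i q) (f i w) ▸ hw i
      exact s_pp (s_pp h1 (hsame i hij)) (hz i)

end Aux

/-- fix a vertex `X`. For vertices `X', X''` with `f0`-value `≥ f0 (pt X)`,
the matrices `θ(X',Δ)` (equal to `1` iff `Δ ⊆ C⁺_{X'}`) and `ν(Δ,X'')` (equal to
`(-1)^{|ℋ(Δ,Δ_{X''})|}` iff `X''` is in the closure of `Δ`) indexed by the vertices in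
`𝒳_X` and the domains in `𝒟⁺_X` are inverse to each other. -/
theorem stmt_5 {k N : ℕ} (hk : 1 ≤ k) (hkN : k ≤ N)
    (f : Fin N → ((Fin k → ℝ) →ᵃ[ℝ] ℝ)) (hf : Generic f)
    (f0 : (Fin k → ℝ) →ₗ[ℝ] ℝ) (hf0 : GenericLin f f0)
    (pt : {S : Finset (Fin N) // S.card = k} → (Fin k → ℝ))
    (hpt : ∀ S : {S : Finset (Fin N) // S.card = k}, IsVertexOf f S.1 (pt S))
    (D : {S : Finset (Fin N) // S.card = k} → Set (Fin k → ℝ))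
    (hD : ∀ S : {S : Finset (Fin N) // S.card = k}, IsDomOf f f0 (pt S) (D S))
    (C : {S : Finset (Fin N) // S.card = k} → Set (Fin k → ℝ))
    (hC : ∀ S : {S : Finset (Fin N) // S.card = k}, IsPosCone f f0 S.1 (pt S) (C S))
    (XofD : Set (Fin k → ℝ) → {S : Finset (Fin N) // S.card = k})
    (hXofD : ∀ Δ : Set (Fin k → ℝ), MemDplus f f0 Δ →
      pt (XofD Δ) ∈ closure Δ ∧ ∀ y ∈ closure Δ, f0 (pt (XofD Δ)) ≤ f0 y)
    (X : {S : Finset (Fin N) // S.card = k})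
    (Ds : Finset (Set (Fin k → ℝ)))
    (hDs : ∀ Δ : Set (Fin k → ℝ),
      Δ ∈ Ds ↔ MemDplus f f0 Δ ∧ f0 (pt X) ≤ f0 (pt (XofD Δ))) :
    ∀ X' X'' : {S : Finset (Fin N) // S.card = k},
      f0 (pt X) ≤ f0 (pt X') → f0 (pt X) ≤ f0 (pt X'') →
      (∑ Δ ∈ Ds, (if Δ ⊆ C X' then (1 : ℝ) else 0) *
        (if pt X'' ∈ closure Δ then (-1 : ℝ) ^ (SepSet f Δ (D X'')).card else 0)) =
      (if X' = X'' then (1 : ℝ) else 0) := by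
  intro X' X'' hX' hX''
  have hf0c : Continuous f0 := f0.continuous_of_finiteDimensional
  -- closure bound helper
  have hclosure_le : ∀ (Δ : Set (Fin k → ℝ)) (v : ℝ), (∀ z ∈ Δ, v ≤ f0 z) →
      ∀ w ∈ closure Δ, v ≤ f0 w := by
    intro Δ v h w hw
    have hcl : IsClosed {z : Fin k → ℝ | v ≤ f0 z} := isClosed_le continuous_const hf0c
    exact closure_minimal h hcl hw
  -- membership in Ds
  have hDs_iff : ∀ Δ : Set (Fin k → ℝ),
      Δ ∈ Ds ↔ (IsDomain f Δ ∧ ∀ z ∈ Δ, f0 (pt X) ≤ f0 z) := by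
    intro Δ
    rw [hDs]
    constructor
    · rintro ⟨⟨hdom, hbdd⟩, hge⟩
      exact ⟨hdom, fun z hz =>
        le_trans hge ((hXofD Δ ⟨hdom, hbdd⟩).2 z (subset_closure hz))⟩
    · rintro ⟨hdom, hge⟩
      have hbdd : BddBelow (f0 '' Δ) := by
        refine ⟨f0 (pt X), ?_⟩
        rintro v ⟨z, hz, rfl⟩
        exact hge z hz
      exact ⟨⟨hdom, hbdd⟩, hclosure_le Δ _ hge _ (hXofD Δ ⟨hdom, hbdd⟩).1⟩
  -- vertex data for X''
  have hy0 : ∀ m ∈ X''.1, f m (pt X'') = 0 := (hpt X'').2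
  have hoffy0 : ∀ i ∉ X''.1, f i (pt X'') ≠ 0 := fun i hi =>
    vertex_offT hf X''.2 hy0 hi
  -- dual vectors at X''
  have hWex : ∀ j : Fin N, ∃ w : Fin k → ℝ, j ∈ X''.1 →
      ((∀ m ∈ X''.1, m ≠ j → (f m).linear w = 0) ∧ (f j).linear w = 1 ∧ f0 w ≠ 0) := by
    intro j
    by_cases hj : j ∈ X''.1
    · obtain ⟨w, h⟩ := exists_W hf hf0 X''.2 hy0 hj
      exact ⟨w, fun _ => h⟩
    · exact ⟨0, fun h => absurd h hj⟩
  choose W hW using hWex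
  have hW1 : ∀ i ∈ X''.1, (∀ m ∈ X''.1, m ≠ i → (f m).linear (W i) = 0) ∧
      (f i).linear (W i) = 1 := fun i hi => ⟨(hW i hi).1, (hW i hi).2.1⟩
  have hWf0 : ∀ i ∈ X''.1, f0 (W i) ≠ 0 := fun i hi => (hW i hi).2.2
  -- cones as cells
  obtain ⟨x₁, hx₁, hC'eq⟩ := cone_eq_cell (hC X').1
  have hC'pos : ∀ u ∈ C X', f0 (pt X') < f0 u := (hC X').2
  -- the domain D X'' as a cell
  obtain ⟨r, hr, hDr⟩ := isDomain_iff_cell (hD X'').1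
  have hDcl : pt X'' ∈ closure (D X'') := (hD X'').2.1
  have hDpos : ∀ z ∈ D X'', f0 (pt X'') < f0 z := (hD X'').2.2
  rcases lt_trichotomy (f0 (pt X')) (f0 (pt X'')) with hlt | heq | hgt
  · -- CASE f0 X' < f0 X'' : sign-reversing involution, sum = 0
    have hne : X' ≠ X'' := fun h => by rw [h] at hlt; exact lt_irrefl _ hlt
    rw [if_neg hne]
    have hsub : ¬ (X''.1 ⊆ X'.1) := by
      intro hsub
      exact hne (Subtype.ext
        (Finset.eq_of_subset_of_card_le hsub (by rw [X'.2, X''.2])).symm)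
    obtain ⟨j₀, hj₀T, hj₀X'⟩ := Finset.not_subset.1 hsub
    -- main flip facts
    have hmain : ∀ Δ ∈ Ds, (Δ ⊆ C X' ∧ pt X'' ∈ closure Δ) →
        flipSet f j₀ Δ ∈ Ds ∧
        (flipSet f j₀ Δ ⊆ C X' ∧ pt X'' ∈ closure (flipSet f j₀ Δ)) ∧
        flipSet f j₀ (flipSet f j₀ Δ) = Δ ∧ flipSet f j₀ Δ ≠ Δ ∧
        ((-1:ℝ) ^ (SepSet f (flipSet f j₀ Δ) (D X'')).card
          = -(-1:ℝ) ^ (SepSet f Δ (D X'')).card) := by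
      intro Δ hΔ hco
      obtain ⟨h1, h2⟩ := hco
      obtain ⟨q, hq, hΔeq⟩ := isDomain_iff_cell ((hDs_iff Δ).1 hΔ).1
      have h2' : pt X'' ∈ closure (cellF f q) := hΔeq ▸ h2
      -- the flipped sign pattern
      set s : Fin N → ℝ := fun i => if i = j₀ then -(f i q) else f i q with hs_def
      have hs : ∀ i ∈ X''.1, s i ≠ 0 := by
        intro i _
        by_cases hij : i = j₀
        · simp only [hs_def, if_pos hij]; exact neg_ne_zero.2 (hq i)
        · simp only [hs_def, if_neg hij]; exact hq i
      obtain ⟨p', hp'T, hp'off, hp'ne, hp'cl⟩ := adj_point hy0 hW1 hoffy0 s hs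
      have hflip : f j₀ q * f j₀ p' < 0 := by
        have := hp'T j₀ hj₀T
        simp only [hs_def, if_pos rfl] at this
        linarith
      have hsame : ∀ i, i ≠ j₀ → 0 < f i q * f i p' := by
        intro i hij
        by_cases hiT : i ∈ X''.1
        · have := hp'T i hiT
          simpa only [hs_def, if_neg hij] using this
        · have ha : 0 < f i q * f i (pt X'') := closure_sign h2' (hoffy0 i hiT)
          have hb : 0 < f i (pt X'') * f i p' := hp'off i hiT
          exact s_pp ha hb
      have hFe : flipSet f j₀ Δ = cellF f p' := by
        rw [hΔeq]; exact flip_eq hq hflip hsame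
      -- q's X'-cone signs
      have hqC : ∀ i ∈ X'.1, 0 < f i x₁ * f i q := by
        intro i hi
        have : q ∈ C X' := h1 (hΔeq ▸ mem_cellF_self hq)
        rw [hC'eq] at this
        exact this i hi
      have hFsubC : flipSet f j₀ Δ ⊆ C X' := by
        rw [hFe, hC'eq]
        intro z hz i hi
        have hij : i ≠ j₀ := fun h => hj₀X' (h ▸ hi)
        exact s_pp (s_pp (hqC i hi) (hsame i hij)) (hz i)
      have hFDs : flipSet f j₀ Δ ∈ Ds := by
        rw [hFe]
        refine (hDs_iff _).2 ⟨isDomain_cellF hp'ne, fun z hz => ?_⟩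
        have : z ∈ C X' := hFsubC (hFe ▸ hz)
        exact le_of_lt (lt_of_le_of_lt hX' (hC'pos _ this))
      refine ⟨hFDs, ⟨hFsubC, hFe ▸ hp'cl⟩, ?_, ?_, ?_⟩
      · -- involutive
        rw [hFe, flip_eq hp'ne (mul_comm (f j₀ q) (f j₀ p') ▸ hflip)
          (fun i hij => mul_comm (f i q) (f i p') ▸ hsame i hij), hΔeq]
      · -- not equal
        rw [hFe, hΔeq]
        intro hEq
        have : p' ∈ cellF f q := hEq ▸ mem_cellF_self hp'ne
        have := this j₀
        nlinarith
      · -- sign of the separating set flips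
        rw [hFe, hΔeq, hDr, sepSet_eq hq hr, sepSet_eq hp'ne hr]
        refine pow_flip (j₀ := j₀) (P := fun i => f i q * f i r < 0)
          (P' := fun i => f i p' * f i r < 0) ?_ ?_
        · intro i hij
          constructor
          · intro h
            exact s_pn (mul_comm (f i q) (f i p') ▸ hsame i hij) h
          · intro h
            exact s_pn (hsame i hij) h
        · constructor
          · intro h
            have : 0 < f j₀ q * f j₀ r := s_nn hflip h
            exact not_lt.2 this.le
          · intro h
            have hqr : 0 < f j₀ q * f j₀ r :=
              (mul_ne_zero (hq j₀) (hr j₀)).lt_or_gt.resolve_left h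
            exact s_np (mul_comm (f j₀ q) (f j₀ p') ▸ hflip) hqr
    -- apply the involution
    refine Finset.sum_involution
      (fun Δ _ => if Δ ⊆ C X' ∧ pt X'' ∈ closure Δ then flipSet f j₀ Δ else Δ)
      ?_ ?_ ?_ ?_
    · intro Δ hΔ
      beta_reduce
      by_cases hco : Δ ⊆ C X' ∧ pt X'' ∈ closure Δ
      · rw [if_pos hco]
        obtain ⟨_, ⟨hc1, hc2⟩, _, _, hpow⟩ := hmain Δ hΔ hco
        rw [if_pos hco.1, if_pos hco.2, if_pos hc1, if_pos hc2, hpow]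
        ring
      · rw [if_neg hco]
        have hz : (if Δ ⊆ C X' then (1:ℝ) else 0) *
            (if pt X'' ∈ closure Δ then (-1:ℝ) ^ (SepSet f Δ (D X'')).card else 0) = 0 := by
          rcases not_and_or.1 hco with h | h
          · rw [if_neg h, zero_mul]
          · rw [if_neg h, mul_zero]
        rw [hz]; ring
    · intro Δ hΔ hFne
      beta_reduce
      by_cases hco : Δ ⊆ C X' ∧ pt X'' ∈ closure Δ
      · rw [if_pos hco]
        exact (hmain Δ hΔ hco).2.2.2.1
      · exfalso
        apply hFne
        rcases not_and_or.1 hco with h | h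
        · rw [if_neg h, zero_mul]
        · rw [if_neg h, mul_zero]
    · intro Δ hΔ
      beta_reduce
      by_cases hco : Δ ⊆ C X' ∧ pt X'' ∈ closure Δ
      · rw [if_pos hco]
        exact (hmain Δ hΔ hco).1
      · rw [if_neg hco]
        exact hΔ
    · intro Δ hΔ
      beta_reduce
      by_cases hco : Δ ⊆ C X' ∧ pt X'' ∈ closure Δ
      · rw [if_pos hco]
        obtain ⟨hFDs, hco', hinv, _, _⟩ := hmain Δ hΔ hco
        rw [if_pos hco']
        exact hinv
      · rw [if_neg hco, if_neg hco]
  · -- CASE f0 X' = f0 X'' : diagonal, sum = 1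
    have hXeq : X' = X'' := by
      by_contra hne
      have hne1 : X'.1 ≠ X''.1 := fun h => hne (Subtype.ext h)
      have hptne : pt X' ≠ pt X'' := by
        intro hpe
        have hsub : ¬ X''.1 ⊆ X'.1 := fun hsub =>
          hne1 (Finset.eq_of_subset_of_card_le hsub (by rw [X'.2, X''.2])).symm
        obtain ⟨j, hjT, hjX'⟩ := Finset.not_subset.1 hsub
        exact (vertex_offT hf X'.2 (hpt X').2 hjX') (by rw [hpe]; exact hy0 j hjT)
      exact hf0.1 (pt X') (pt X'') ⟨X'.1, X'.2, (hpt X').2⟩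
        ⟨X''.1, X''.2, (hpt X'').2⟩ hptne heq
    rw [if_pos hXeq]
    obtain ⟨x₂, hx₂, hC''eq⟩ := cone_eq_cell (hC X'').1
    have hC''pos : ∀ u ∈ cellIn f X''.1 x₂, f0 (pt X'') < f0 u := by
      intro u hu; exact (hC X'').2 u (hC''eq ▸ hu)
    -- D X'' ∈ Ds
    have hDmem : D X'' ∈ Ds := (hDs_iff _).2
      ⟨(hD X'').1, fun z hz => le_of_lt (lt_of_le_of_lt hX'' (hDpos z hz))⟩
    -- the forced signs of D X''
    have hroff : ∀ i ∉ X''.1, 0 < f i r * f i (pt X'') :=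
      fun i hi => closure_sign (hDr ▸ hDcl) (hoffy0 i hi)
    have hrpos : ∀ u ∈ cellF f r, f0 (pt X'') < f0 u := by
      intro u hu; exact hDpos u (hDr ▸ hu)
    have hrforced : ∀ i ∈ X''.1, 0 < f i r * f0 (W i) := fun i hi =>
      forced_sign_dom hy0 hW1 (hWf0 i hi) hr hroff hrpos hi
    rw [Finset.sum_eq_single_of_mem (D X'') hDmem ?_]
    · -- value at D X'' is 1
      have hθ : D X'' ⊆ C X' := by
        rw [hXeq, hC''eq, hDr]
        intro z hz i hiT
        have hx₂forced : 0 < f i x₂ * f0 (W i) :=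
          forced_sign_cone hy0 hW1 (hWf0 i hiT) hx₂ hC''pos hiT
        have hx₂r : 0 < f i x₂ * f i r :=
          s_pp hx₂forced (mul_comm (f i r) (f0 (W i)) ▸ hrforced i hiT)
        exact s_pp hx₂r (hz i)
      rw [if_pos hθ, if_pos hDcl, sepSet_self, Finset.card_empty, pow_zero, one_mul]
    · -- all other terms vanish
      intro Δ hΔ hΔne
      by_cases h1 : Δ ⊆ C X'
      · by_cases h2 : pt X'' ∈ closure Δ
        · exfalso
          apply hΔne
          obtain ⟨q, hq, hΔeq⟩ := isDomain_iff_cell ((hDs_iff Δ).1 hΔ).1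
          rw [hΔeq, hDr]
          apply cellF_eq_of_sign
          intro i
          by_cases hiT : i ∈ X''.1
          · have hqoff : ∀ m ∉ X''.1, 0 < f m q * f m (pt X'') :=
              fun m hm => closure_sign (hΔeq ▸ h2) (hoffy0 m hm)
            have hqpos : ∀ u ∈ cellF f q, f0 (pt X'') < f0 u := by
              intro u hu
              have : u ∈ C X' := h1 (hΔeq ▸ hu)
              rw [hXeq] at this
              exact (hC X'').2 u this
            have hqforced : 0 < f i q * f0 (W i) :=
              forced_sign_dom hy0 hW1 (hWf0 i hiT) hq hqoff hqpos hiT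
            exact s_pp hqforced (mul_comm (f i r) (f0 (W i)) ▸ hrforced i hiT)
          · have ha : 0 < f i q * f i (pt X'') := closure_sign (hΔeq ▸ h2) (hoffy0 i hiT)
            have hb : 0 < f i r * f i (pt X'') := hroff i hiT
            exact s_pp ha (mul_comm (f i r) (f i (pt X'')) ▸ hb)
        · rw [if_neg h2, mul_zero]
      · rw [if_neg h1, zero_mul]
  · -- CASE f0 X'' < f0 X' : every term vanishes
    have hne : X' ≠ X'' := fun h => by rw [h] at hgt; exact lt_irrefl _ hgt
    rw [if_neg hne]
    apply Finset.sum_eq_zero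
    intro Δ _
    by_cases h1 : Δ ⊆ C X'
    · by_cases h2 : pt X'' ∈ closure Δ
      · exfalso
        have : f0 (pt X') ≤ f0 (pt X'') :=
          hclosure_le Δ _ (fun z hz => (hC'pos z (h1 hz)).le) _ h2
        linarith
      · rw [if_neg h2, mul_zero]
    · rw [if_neg h1, zero_mul]

end HypArr
end
end

section
/- The following hold: (i) for every arrangement domain Δ ∈ 𝒟⁺ there is a unique point of the closure of Δ at which f_0 attains its minimum over the closure of Δ, and this point is a vertex of the arrangement, denoted X(Δ); (ii) for every vertex X there is a unique arrangement domain Δ_X whose closure contains X and on which f_0 − f_0(X) > 0, and Δ_X ∈ 𝒟⁺; (iii) the maps Δ ↦ X(Δ) and X ↦ Δ_X are mutually inverse bijections between 𝒟⁺ and the set 𝒳 of vertices. -/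
open Set MeasureTheory Filter
open scoped Classical Real

noncomputable section

namespace HypArr

variable {k N : ℕ}

open scoped Topology

def Cell (f : Fin N → ((Fin k → ℝ) →ᵃ[ℝ] ℝ)) (S : Finset (Fin N)) (x0 : Fin k → ℝ) :
    Set (Fin k → ℝ) := {z | ∀ j ∈ S, 0 < f j x0 * f j z}

variable {f : Fin N → ((Fin k → ℝ) →ᵃ[ℝ] ℝ)}

lemma affApply (j : Fin N) (x v : Fin k → ℝ) :
    f j (x + v) = f j x + (f j).linear v := by
  have := (f j).map_vadd x v
  simpa [vadd_eq_add, add_comm] using this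

lemma cell_isOpen (S : Finset (Fin N)) (x0 : Fin k → ℝ) : IsOpen (Cell f S x0) := by
  have h : Cell f S x0 = ⋂ j ∈ S, {z | 0 < f j x0 * f j z} := by
    ext z; simp [Cell]
  rw [h]
  refine isOpen_biInter_finset fun j _ => ?_
  exact isOpen_lt continuous_const
    (continuous_const.mul (f j).continuous_of_finiteDimensional)

lemma cell_convex (S : Finset (Fin N)) (x0 : Fin k → ℝ) : Convex ℝ (Cell f S x0) := by
  have h : Cell f S x0 = ⋂ j ∈ S, (f j) ⁻¹' {y | 0 < f j x0 * y} := by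
    ext z; simp [Cell]
  rw [h]
  refine convex_iInter₂ fun j _ => Convex.affine_preimage (f j) ?_
  intro y1 h1 y2 h2 a b ha hb hab
  simp only [mem_setOf_eq, smul_eq_mul] at *
  have key : f j x0 * (a * y1 + b * y2) = a * (f j x0 * y1) + b * (f j x0 * y2) := by ring
  rw [key]
  rcases ha.eq_or_lt with h0 | hapos
  · have hb1 : b = 1 := by linarith
    rw [← h0, hb1]; simpa using h2
  · exact add_pos_of_pos_of_nonneg (mul_pos hapos h1) (mul_nonneg hb h2.le)

lemma mem_cell_self {S : Finset (Fin N)} {x0 : Fin k → ℝ} (h : ∀ j ∈ S, f j x0 ≠ 0) :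
    x0 ∈ Cell f S x0 := fun j hj => mul_self_pos.mpr (h j hj)

lemma cell_subset_ne {S : Finset (Fin N)} {x0 : Fin k → ℝ} :
    Cell f S x0 ⊆ {z | ∀ j ∈ S, f j z ≠ 0} := by
  intro z hz j hj hzero
  have := hz j hj
  rw [hzero, mul_zero] at this
  exact lt_irrefl 0 this

lemma connectedComponentIn_eq_cell {S : Finset (Fin N)} {x0 : Fin k → ℝ}
    (h : ∀ j ∈ S, f j x0 ≠ 0) :
    connectedComponentIn {z | ∀ j ∈ S, f j z ≠ 0} x0 = Cell f S x0 := by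
  have hx0F : x0 ∈ {z | ∀ j ∈ S, f j z ≠ 0} := h
  apply Subset.antisymm
  · -- component ⊆ cell
    set D : Set (Fin k → ℝ) := ⋃ j ∈ S, {z | f j x0 * f j z < 0} with hD
    have hDopen : IsOpen D := by
      refine isOpen_biUnion fun j _ => ?_
      exact isOpen_lt (continuous_const.mul (f j).continuous_of_finiteDimensional)
        continuous_const
    have hdisj : Disjoint (Cell f S x0) D := by
      rw [Set.disjoint_left]
      rintro z hz hzD
      simp only [hD, mem_iUnion, mem_setOf_eq] at hzD
      obtain ⟨j, hj, hneg⟩ := hzD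
      exact absurd (hz j hj) (not_lt.mpr hneg.le)
    have hsub : connectedComponentIn {z | ∀ j ∈ S, f j z ≠ 0} x0 ⊆ Cell f S x0 ∪ D := by
      intro z hz
      have hzF : ∀ j ∈ S, f j z ≠ 0 := connectedComponentIn_subset _ _ hz
      by_cases hall : ∀ j ∈ S, 0 < f j x0 * f j z
      · exact Or.inl hall
      · push_neg at hall
        obtain ⟨j, hj, hle⟩ := hall
        refine Or.inr ?_
        simp only [hD, mem_iUnion, mem_setOf_eq]
        exact ⟨j, hj, lt_of_le_of_ne hle (mul_ne_zero (h j hj) (hzF j hj))⟩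
    refine IsPreconnected.subset_left_of_subset_union (cell_isOpen S x0) hDopen hdisj hsub
      ?_ isPreconnected_connectedComponentIn
    exact ⟨x0, mem_connectedComponentIn hx0F, mem_cell_self h⟩
  · exact (cell_convex S x0).isPreconnected.subset_connectedComponentIn
      (mem_cell_self h) cell_subset_ne

lemma closure_cell {S : Finset (Fin N)} {x0 : Fin k → ℝ} (h : ∀ j ∈ S, f j x0 ≠ 0) :
    closure (Cell f S x0) = {z | ∀ j ∈ S, 0 ≤ f j x0 * f j z} := by
  apply Subset.antisymm
  · apply closure_minimal
    · intro z hz j hj; exact (hz j hj).le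
    · have hset : {z | ∀ j ∈ S, 0 ≤ f j x0 * f j z} = ⋂ j ∈ S, {z | 0 ≤ f j x0 * f j z} := by
        ext z; simp
      rw [hset]
      exact isClosed_biInter fun j _ => isClosed_le continuous_const
        (continuous_const.mul (f j).continuous_of_finiteDimensional)
  · intro p hp
    have key : ∀ t ∈ Ioo (0:ℝ) 1, x0 + t • (p - x0) ∈ Cell f S x0 := by
      intro t ht j hj
      have hlin : (f j).linear (t • (p - x0)) = t * (f j p - f j x0) := by
        have hvs := (f j).linearMap_vsub p x0
        rw [vsub_eq_sub, vsub_eq_sub] at hvs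
        rw [(f j).linear.map_smul, hvs]
        simp [smul_eq_mul]
      rw [affApply, hlin]
      have h1 : 0 < f j x0 * f j x0 := mul_self_pos.mpr (h j hj)
      have h2 : 0 ≤ f j x0 * f j p := hp j hj
      nlinarith [ht.1, ht.2]
    have htend : Tendsto (fun t : ℝ => x0 + t • (p - x0)) (𝓝[<] (1:ℝ)) (𝓝 p) := by
      have hcont : Continuous (fun t : ℝ => x0 + t • (p - x0)) :=
        continuous_const.add (continuous_id.smul continuous_const)
      have := hcont.tendsto 1
      simp only [one_smul, add_sub_cancel] at this
      exact this.mono_left nhdsWithin_le_nhds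
    refine mem_closure_of_tendsto htend ?_
    filter_upwards [Ioo_mem_nhdsLT_of_mem (by constructor <;> norm_num :
      (1:ℝ) ∈ Ioc (0:ℝ) 1)] with t ht
    exact key t ht

lemma isDomain_iff {Δ : Set (Fin k → ℝ)} :
    IsDomain f Δ ↔ ∃ x0, (∀ j, f j x0 ≠ 0) ∧ Δ = Cell f Finset.univ x0 := by
  have hset : HypCompl f = {z | ∀ j ∈ Finset.univ, f j z ≠ 0} := by
    ext z; simp [HypCompl]
  constructor
  · rintro ⟨x0, hx0, rfl⟩
    have hx0' : ∀ j, f j x0 ≠ 0 := hx0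
    exact ⟨x0, hx0', by rw [hset, connectedComponentIn_eq_cell (fun j _ => hx0' j)]⟩
  · rintro ⟨x0, hx0, rfl⟩
    exact ⟨x0, hx0, by rw [hset, connectedComponentIn_eq_cell (fun j _ => hx0 j)]⟩

lemma affApply_smul (j : Fin N) (x d : Fin k → ℝ) (t : ℝ) :
    f j (x + t • d) = f j x + t * (f j).linear d := by
  rw [affApply, (f j).linear.map_smul, smul_eq_mul]

lemma linsub (j : Fin N) (a b : Fin k → ℝ) :
    (f j).linear (a - b) = f j a - f j b := by
  have hvs := (f j).linearMap_vsub a b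
  rwa [vsub_eq_sub, vsub_eq_sub] at hvs

lemma sign_transfer {a b : ℝ} (h : 0 < a * b) (z : ℝ) : 0 < a * z ↔ 0 < b * z := by
  have ha : a ≠ 0 := fun h0 => by simp [h0] at h
  have hb : b ≠ 0 := fun h0 => by simp [h0] at h
  constructor
  · intro haz
    have key : b * z = (a * b) * (a * z) / (a * a) := by field_simp
    rw [key]; exact div_pos (mul_pos h haz) (mul_self_pos.mpr ha)
  · intro hbz
    have key : a * z = (a * b) * (b * z) / (b * b) := by field_simp
    rw [key]; exact div_pos (mul_pos h hbz) (mul_self_pos.mpr hb)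

lemma eventually_pos_all {x d : Fin k → ℝ} {T : Finset (Fin N)} {g : Fin N → ℝ}
    (hpos : ∀ j ∈ T, 0 < g j * f j x) :
    ∀ᶠ t : ℝ in 𝓝[>] 0, ∀ j ∈ T, 0 < g j * f j (x + t • d) := by
  rw [eventually_all_finset]
  intro j hj
  have hcont : Continuous (fun t : ℝ => g j * f j (x + t • d)) := by
    have : (fun t : ℝ => g j * f j (x + t • d)) =
        fun t : ℝ => g j * (f j x + t * (f j).linear d) := by
      funext t; rw [affApply_smul]
    rw [this]
    exact continuous_const.mul (continuous_const.add (continuous_id.mul continuous_const))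
  have h0 : 0 < g j * f j (x + (0:ℝ) • d) := by
    simpa using hpos j hj
  have : ∀ᶠ t : ℝ in 𝓝 0, 0 < g j * f j (x + t • d) :=
    (hcont.tendsto 0).eventually (eventually_gt_nhds h0)
  exact this.filter_mono nhdsWithin_le_nhds

section GenericFacts

variable {f0 : (Fin k → ℝ) →ₗ[ℝ] ℝ}

lemma exists_dir (hf0 : GenericLin f f0) {U : Finset (Fin N)} (hU : U.card = k - 1) :
    ∃ w, (∀ j ∈ U, (f j).linear w = 0) ∧ f0 w < 0 := by
  obtain ⟨x, y, hx, hy, hne⟩ := hf0.2 U hU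
  rcases hne.lt_or_gt with h | h
  · refine ⟨x - y, fun j hj => ?_, ?_⟩
    · rw [linsub, hx j hj, hy j hj, sub_zero]
    · rw [map_sub]; linarith
  · refine ⟨y - x, fun j hj => ?_, ?_⟩
    · rw [linsub, hx j hj, hy j hj, sub_zero]
    · rw [map_sub]; linarith

lemma joint_inj (hf : Generic f) {S : Finset (Fin N)} (hS : S.card = k) {d : Fin k → ℝ}
    (hd : ∀ j ∈ S, (f j).linear d = 0) : d = 0 := by
  obtain ⟨X, hX, huniq⟩ := hf.2.1 S hS
  have h2 : ∀ j ∈ S, f j (X + d) = 0 := by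
    intro j hj
    rw [affApply, hd j hj, hX j hj, add_zero]
  have := huniq (X + d) h2
  have h3 : X + d = X := this
  simpa using congrArg (fun z => z - X) h3

lemma off_vertex_ne (hf : Generic f) {S : Finset (Fin N)} {X : Fin k → ℝ}
    (hS : S.card = k) (hX : ∀ j ∈ S, f j X = 0) {j : Fin N} (hj : j ∉ S) : f j X ≠ 0 := by
  intro h0
  refine hf.2.2 (insert j S) ?_ ⟨X, ?_⟩
  · rw [Finset.card_insert_of_notMem hj, hS]
  · intro i hi
    rcases Finset.mem_insert.mp hi with rfl | hi
    · exact h0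
    · exact hX i hi

lemma vertex_core (hf : Generic f) (hf0 : GenericLin f f0)
    {X : Fin k → ℝ} {S : Finset (Fin N)} (hS : S.card = k) (hX : ∀ j ∈ S, f j X = 0) :
    ∃ c : Fin N → ℝ, (∀ j ∈ S, c j ≠ 0) ∧
      (∀ y, f0 y = f0 X + ∑ j ∈ S, c j * f j y) ∧
      (∀ u : Fin N → ℝ, ∃ d, ∀ j ∈ S, (f j).linear d = u j) := by
  classical
  set L : (Fin k → ℝ) →ₗ[ℝ] (↥S → ℝ) :=
    LinearMap.pi (fun j : ↥S => (f (j : Fin N)).linear) with hL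
  have hLapp : ∀ d (j : ↥S), L d j = (f (j : Fin N)).linear d := fun d j => rfl
  have hinj : Function.Injective L := by
    rw [← LinearMap.ker_eq_bot, LinearMap.ker_eq_bot']
    intro d hd
    refine joint_inj hf hS fun j hj => ?_
    have := congrFun hd ⟨j, hj⟩
    simpa [hLapp] using this
  have hdim : Module.finrank ℝ (Fin k → ℝ) = Module.finrank ℝ (↥S → ℝ) := by
    rw [Module.finrank_pi, Module.finrank_pi]
    simp [hS]
  set e := L.linearEquivOfInjective hinj hdim with he
  have heapp : ∀ d (j : ↥S), e d j = (f (j : Fin N)).linear d := fun d j => rfl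
  set c' : ↥S → ℝ := fun j => f0 (e.symm ((Pi.single j 1 : ↥S → ℝ))) with hc'
  have hdecomp0 : ∀ u : ↥S → ℝ, f0 (e.symm u) = ∑ j : ↥S, c' j * u j := by
    intro u
    have hu : u = ∑ j : ↥S, u j • (Pi.single j 1 : ↥S → ℝ) := by
      ext i
      rw [Finset.sum_apply]
      simp [Pi.single_apply]
    calc f0 (e.symm u) = f0 (e.symm (∑ j : ↥S, u j • (Pi.single j 1 : ↥S → ℝ))) := by rw [← hu]
    _ = ∑ j : ↥S, u j * f0 (e.symm ((Pi.single j 1 : ↥S → ℝ))) := by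
        rw [map_sum, map_sum]
        simp [smul_eq_mul]
    _ = ∑ j : ↥S, c' j * u j := by
        refine Finset.sum_congr rfl fun j _ => ?_; rw [hc']; ring
  have hdecomp : ∀ d, f0 d = ∑ j : ↥S, c' j * (f (j : Fin N)).linear d := by
    intro d
    calc f0 d = f0 (e.symm (e d)) := by rw [e.symm_apply_apply]
    _ = ∑ j : ↥S, c' j * (e d) j := hdecomp0 (e d)
    _ = _ := Finset.sum_congr rfl fun j _ => by rw [heapp]
  have hc'ne : ∀ j : ↥S, c' j ≠ 0 := by
    intro j hj0
    have hUcard : (S.erase (j : Fin N)).card = k - 1 := by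
      rw [Finset.card_erase_of_mem j.2, hS]
    obtain ⟨w, hw, hwneg⟩ := exists_dir hf0 hUcard
    have hew : e w = ((f (j : Fin N)).linear w) • (Pi.single j 1 : ↥S → ℝ) := by
      funext i
      rw [heapp]
      by_cases hij : i = j
      · subst hij; simp
      · have hiU : (i : Fin N) ∈ S.erase (j : Fin N) :=
          Finset.mem_erase.mpr ⟨fun hc => hij (Subtype.ext hc), i.2⟩
        rw [hw i hiU]
        simp [Pi.single_apply, hij]
    have hweq : w = ((f (j : Fin N)).linear w) • e.symm ((Pi.single j 1 : ↥S → ℝ)) := by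
      apply e.injective
      rw [_root_.map_smul, e.apply_symm_apply, hew]
    have hfw : f0 w = ((f (j : Fin N)).linear w) * c' j := by
      rw [hc']
      conv_lhs => rw [hweq]
      rw [_root_.map_smul, smul_eq_mul]
    rw [hj0, mul_zero] at hfw
    exact absurd hfw hwneg.ne
  refine ⟨fun i => if h : i ∈ S then c' ⟨i, h⟩ else 0, fun j hj => ?_, fun y => ?_, fun u => ?_⟩
  · show (if h : j ∈ S then c' ⟨j, h⟩ else 0) ≠ 0
    rw [dif_pos hj]; exact hc'ne ⟨j, hj⟩
  · have h1 : f0 y - f0 X = f0 (y - X) := (map_sub f0 y X).symm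
    have h2 : f0 (y - X) = ∑ j : ↥S, c' j * (f (j : Fin N)).linear (y - X) := hdecomp _
    have h3 : ∀ j : ↥S, (f (j : Fin N)).linear (y - X) = f (j : Fin N) y := by
      intro j
      rw [linsub, hX _ j.2, sub_zero]
    have h4 : ∑ j ∈ S, (if h : j ∈ S then c' ⟨j, h⟩ else 0) * f j y
        = ∑ j : ↥S, c' j * (f (j : Fin N)).linear (y - X) := by
      rw [← Finset.sum_coe_sort S (fun j => (if h : j ∈ S then c' ⟨j, h⟩ else 0) * f j y)]
      refine Finset.sum_congr rfl fun j _ => ?_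
      show (if h : (j:Fin N) ∈ S then c' ⟨j, h⟩ else 0) * f (j:Fin N) y = _
      rw [dif_pos j.2, h3 j]
    rw [h4, ← h2]
    linarith [h1]
  · refine ⟨e.symm (fun j : ↥S => u (j : Fin N)), fun j hj => ?_⟩
    have := heapp (e.symm (fun j : ↥S => u (j : Fin N))) ⟨j, hj⟩
    rw [e.apply_symm_apply] at this
    exact this.symm

end GenericFacts
section MinSide

variable {f0 : (Fin k → ℝ) →ₗ[ℝ] ℝ}

lemma eventually_pos_linear {T : Finset (Fin N)} {a b : Fin N → ℝ}
    (h : ∀ j ∈ T, 0 < a j) : ∀ᶠ t : ℝ in 𝓝[>] 0, ∀ j ∈ T, 0 < a j + t * b j := by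
  rw [eventually_all_finset]
  intro j hj
  have hcont : Continuous (fun t : ℝ => a j + t * b j) :=
    continuous_const.add (continuous_id.mul continuous_const)
  have h0 : 0 < a j + (0:ℝ) * b j := by simpa using h j hj
  exact ((hcont.tendsto 0).eventually (eventually_gt_nhds h0)).filter_mono nhdsWithin_le_nhds

lemma ray_unbounded {x0 : Fin k → ℝ} (hx0 : ∀ j, f j x0 ≠ 0)
    (hbdd : BddBelow (f0 '' Cell f Finset.univ x0))
    {d' : Fin k → ℝ} (hrec : ∀ j, 0 ≤ f j x0 * (f j).linear d') : ¬ f0 d' < 0 := by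
  intro hneg
  obtain ⟨b, hb⟩ := hbdd
  have hble : b ≤ f0 x0 := hb (mem_image_of_mem f0 (mem_cell_self fun j _ => hx0 j))
  set t := (f0 x0 - b + 1) / (-(f0 d')) with ht
  have htpos : 0 ≤ t := div_nonneg (by linarith) (by linarith)
  have hmem : x0 + t • d' ∈ Cell f Finset.univ x0 := by
    intro j _
    rw [affApply_smul]
    have h1 : 0 < f j x0 * f j x0 := mul_self_pos.mpr (hx0 j)
    have h2 : 0 ≤ t * (f j x0 * (f j).linear d') := mul_nonneg htpos (hrec j)
    nlinarith
  have hble2 : b ≤ f0 (x0 + t • d') := hb (mem_image_of_mem f0 hmem)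
  rw [map_add, _root_.map_smul, smul_eq_mul] at hble2
  have h1 : -f0 d' ≠ 0 := by linarith
  have hprod : t * f0 d' = -(f0 x0 - b + 1) := by
    calc t * f0 d' = -((f0 x0 - b + 1) * (-f0 d')⁻¹ * (-f0 d')) := by
          rw [ht, division_def]; ring
    _ = -(f0 x0 - b + 1) := by rw [mul_assoc, inv_mul_cancel₀ h1, mul_one]
  linarith

lemma rec_pos (hk : 1 ≤ k) (hkN : k ≤ N) (hf : Generic f) (hf0 : GenericLin f f0)
    {x0 : Fin k → ℝ} (hx0 : ∀ j, f j x0 ≠ 0)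
    (hbdd : BddBelow (f0 '' Cell f Finset.univ x0))
    {d : Fin k → ℝ} (hd : d ≠ 0) (hrec : ∀ j, 0 ≤ f j x0 * (f j).linear d) :
    0 < f0 d := by
  rcases lt_trichotomy (f0 d) 0 with h | h | h
  · exact absurd h (ray_unbounded hx0 hbdd hrec)
  · exfalso
    set A := Finset.univ.filter (fun j => (f j).linear d = 0) with hA
    have hAcard : A.card ≤ k - 1 := by
      by_contra hc
      push_neg at hc
      obtain ⟨S, hSA, hScard⟩ := Finset.exists_subset_card_eq (show k ≤ A.card by omega)
      exact hd (joint_inj hf hScard (fun j hj => (Finset.mem_filter.mp (hSA hj)).2))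
    have hunivcard : (Finset.univ : Finset (Fin N)).card = N := by simp
    obtain ⟨U, hAU, _, hUcard⟩ :=
      Finset.exists_subsuperset_card_eq A.subset_univ hAcard (by omega)
    obtain ⟨w, hw, hwneg⟩ := exists_dir hf0 hUcard
    set T := Finset.univ.filter (fun j => j ∉ A) with hT
    have hstrict : ∀ j ∈ T, 0 < f j x0 * (f j).linear d := by
      intro j hj
      have hjA : j ∉ A := (Finset.mem_filter.mp hj).2
      have hne : (f j).linear d ≠ 0 := by
        intro h0
        exact hjA (Finset.mem_filter.mpr ⟨Finset.mem_univ j, h0⟩)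
      exact lt_of_le_of_ne (hrec j) (Ne.symm (mul_ne_zero (hx0 j) hne))
    have hev : ∀ᶠ t : ℝ in 𝓝[>] 0,
        ∀ j ∈ T, 0 < f j x0 * (f j).linear d + t * (f j x0 * (f j).linear w) :=
      eventually_pos_linear hstrict
    obtain ⟨t1, ht1, ht1pos⟩ := (hev.and self_mem_nhdsWithin).exists
    have ht1pos' : (0:ℝ) < t1 := ht1pos
    have hlin : ∀ j, (f j).linear (d + t1 • w)
        = (f j).linear d + t1 * (f j).linear w := by
      intro j; rw [map_add, _root_.map_smul, smul_eq_mul]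
    have hrec' : ∀ j, 0 ≤ f j x0 * (f j).linear (d + t1 • w) := by
      intro j
      by_cases hjA : j ∈ A
      · have h1 : (f j).linear d = 0 := (Finset.mem_filter.mp hjA).2
        have h2 : (f j).linear w = 0 := hw j (hAU hjA)
        rw [hlin, h1, h2]; ring_nf; exact le_refl 0
      · have := ht1 j (Finset.mem_filter.mpr ⟨Finset.mem_univ j, hjA⟩)
        rw [hlin]
        nlinarith [this]
    have hneg : f0 (d + t1 • w) < 0 := by
      rw [map_add, _root_.map_smul, smul_eq_mul, h]
      have : t1 * f0 w < 0 := mul_neg_of_pos_of_neg ht1pos' hwneg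
      linarith
    exact ray_unbounded hx0 hbdd hrec' hneg
  · exact h

lemma min_is_vertex (hk : 1 ≤ k) (hkN : k ≤ N) (hf : Generic f) (hf0 : GenericLin f f0)
    {x0 : Fin k → ℝ} (hx0 : ∀ j, f j x0 ≠ 0) {x : Fin k → ℝ}
    (hxcl : x ∈ closure (Cell f Finset.univ x0))
    (hmin : ∀ y ∈ closure (Cell f Finset.univ x0), f0 x ≤ f0 y) : IsVertex f x := by
  set A := Finset.univ.filter (fun j => f j x = 0) with hA
  by_cases hcard : k ≤ A.card
  · obtain ⟨S, hSA, hScard⟩ := Finset.exists_subset_card_eq hcard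
    exact ⟨S, hScard, fun j hj => (Finset.mem_filter.mp (hSA hj)).2⟩
  · exfalso
    have hAcard : A.card ≤ k - 1 := by omega
    have hunivcard : (Finset.univ : Finset (Fin N)).card = N := by simp
    obtain ⟨U, hAU, _, hUcard⟩ :=
      Finset.exists_subsuperset_card_eq A.subset_univ hAcard (by omega)
    obtain ⟨w, hw, hwneg⟩ := exists_dir hf0 hUcard
    have hweak : ∀ j, 0 ≤ f j x0 * f j x := by
      rw [closure_cell (fun j _ => hx0 j)] at hxcl
      exact fun j => hxcl j (Finset.mem_univ j)
    set T := Finset.univ.filter (fun j => j ∉ A) with hT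
    have hstrict : ∀ j ∈ T, 0 < f j x0 * f j x := by
      intro j hj
      have hjA : j ∉ A := (Finset.mem_filter.mp hj).2
      have hne : f j x ≠ 0 := by
        intro h0
        exact hjA (Finset.mem_filter.mpr ⟨Finset.mem_univ j, h0⟩)
      exact lt_of_le_of_ne (hweak j) (Ne.symm (mul_ne_zero (hx0 j) hne))
    have hev : ∀ᶠ t : ℝ in 𝓝[>] 0, ∀ j ∈ T, 0 < f j x0 * f j (x + t • w) :=
      eventually_pos_all hstrict
    obtain ⟨t1, ht1, ht1pos⟩ := (hev.and self_mem_nhdsWithin).exists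
    have ht1pos' : (0:ℝ) < t1 := ht1pos
    have hzcl : x + t1 • w ∈ closure (Cell f Finset.univ x0) := by
      rw [closure_cell (fun j _ => hx0 j)]
      intro j _
      by_cases hjA : j ∈ A
      · have h1 : f j x = 0 := (Finset.mem_filter.mp hjA).2
        have h2 : (f j).linear w = 0 := hw j (hAU hjA)
        rw [affApply_smul, h1, h2]; ring_nf; exact le_refl 0
      · exact (ht1 j (Finset.mem_filter.mpr ⟨Finset.mem_univ j, hjA⟩)).le
    have hlt : f0 (x + t1 • w) < f0 x := by
      rw [map_add, _root_.map_smul, smul_eq_mul]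
      have : t1 * f0 w < 0 := mul_neg_of_pos_of_neg ht1pos' hwneg
      linarith
    exact absurd (hmin _ hzcl) (not_le.mpr hlt)

lemma exists_min (hk : 1 ≤ k) (hkN : k ≤ N) (hf : Generic f) (hf0 : GenericLin f f0)
    {x0 : Fin k → ℝ} (hx0 : ∀ j, f j x0 ≠ 0)
    (hbdd : BddBelow (f0 '' Cell f Finset.univ x0)) :
    ∃ x ∈ closure (Cell f Finset.univ x0),
      ∀ y ∈ closure (Cell f Finset.univ x0), f0 x ≤ f0 y := by
  set D := closure (Cell f Finset.univ x0) with hD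
  set T := D ∩ {y | f0 y ≤ f0 x0} with hT
  have hx0D : x0 ∈ D := subset_closure (mem_cell_self fun j _ => hx0 j)
  have hx0T : x0 ∈ T := ⟨hx0D, show f0 x0 ≤ f0 x0 from le_refl _⟩
  have hTclosed : IsClosed T :=
    isClosed_closure.inter (isClosed_le f0.continuous_of_finiteDimensional continuous_const)
  have hDweak : ∀ z ∈ D, ∀ j, 0 ≤ f j x0 * f j z := by
    intro z hz j
    rw [hD, closure_cell (fun j _ => hx0 j)] at hz
    exact hz j (Finset.mem_univ j)
  have hTsub : ∃ r : ℝ, T ⊆ Metric.closedBall x0 r := by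
    by_contra hc
    push_neg at hc
    have hseq : ∀ n : ℕ, ∃ y, y ∈ T ∧ (n + 1 : ℝ) < dist y x0 := by
      intro n
      obtain ⟨y, hyT, hy⟩ := Set.not_subset.mp (hc ((n : ℝ) + 1))
      exact ⟨y, hyT, by simpa [Metric.mem_closedBall, not_le] using hy⟩
    choose y hyT hyd using hseq
    have hdistpos : ∀ n, (0:ℝ) < dist (y n) x0 := fun n =>
      lt_of_le_of_lt (by positivity) (hyd n)
    set dd : ℕ → (Fin k → ℝ) := fun n => (dist (y n) x0)⁻¹ • (y n - x0) with hdd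
    have hddnorm : ∀ n, ‖dd n‖ = 1 := by
      intro n
      rw [hdd]
      simp only [norm_smul, norm_inv, Real.norm_eq_abs]
      rw [abs_of_pos (hdistpos n), dist_eq_norm]
      exact inv_mul_cancel₀ (by rw [← dist_eq_norm]; exact (hdistpos n).ne')
    obtain ⟨a, _, φ, hφ, hconv⟩ := tendsto_subseq_of_bounded
      (Metric.isBounded_closedBall (x := (0 : Fin k → ℝ)) (r := 1))
      (fun n => by rw [Metric.mem_closedBall, dist_zero_right, hddnorm n])
    have hanorm : ‖a‖ = 1 := by
      have h1 : Tendsto (fun n => ‖dd (φ n)‖) atTop (𝓝 ‖a‖) :=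
        (continuous_norm.tendsto a).comp hconv
      have h2 : (fun n => ‖dd (φ n)‖) = fun _ => (1:ℝ) := funext fun n => hddnorm (φ n)
      rw [h2] at h1
      exact tendsto_nhds_unique h1 tendsto_const_nhds
    have hane : a ≠ 0 := by
      intro h0; rw [h0, norm_zero] at hanorm; exact one_ne_zero hanorm.symm
    have hinv0 : Tendsto (fun n => (dist (y (φ n)) x0)⁻¹) atTop (𝓝 0) := by
      apply squeeze_zero (fun n => by positivity) (fun n => ?_)
        tendsto_one_div_add_atTop_nhds_zero_nat
      have hle : ((n : ℝ) + 1) ≤ dist (y (φ n)) x0 := by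
        have h0 : n ≤ φ n := hφ.le_apply
        have h1 : ((n : ℝ)) ≤ (φ n : ℝ) := by exact_mod_cast h0
        have := (hyd (φ n)).le
        linarith
      rw [one_div]
      exact inv_anti₀ (by positivity) hle
    have hkey : ∀ j, 0 ≤ f j x0 * (f j).linear a := by
      intro j
      have hterm : ∀ n, f j x0 * (f j).linear (dd n)
          + (dist (y n) x0)⁻¹ * (f j x0 * f j x0)
          = (dist (y n) x0)⁻¹ * (f j x0 * f j (y n)) := by
        intro n
        rw [hdd]
        simp only []
        rw [(f j).linear.map_smul, smul_eq_mul, linsub]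
        ring
      have hlim1 : Tendsto (fun n => f j x0 * (f j).linear (dd (φ n))) atTop
          (𝓝 (f j x0 * (f j).linear a)) :=
        ((continuous_const.mul (f j).linear.continuous_of_finiteDimensional).tendsto a).comp hconv
      have hlim2 : Tendsto (fun n => (dist (y (φ n)) x0)⁻¹ * (f j x0 * f j x0)) atTop (𝓝 0) := by
        simpa using hinv0.mul_const (f j x0 * f j x0)
      have hlim : Tendsto (fun n => f j x0 * (f j).linear (dd (φ n))
          + (dist (y (φ n)) x0)⁻¹ * (f j x0 * f j x0)) atTop
          (𝓝 (f j x0 * (f j).linear a)) := by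
        simpa using hlim1.add hlim2
      have hge : ∀ n, 0 ≤ f j x0 * (f j).linear (dd (φ n))
          + (dist (y (φ n)) x0)⁻¹ * (f j x0 * f j x0) := by
        intro n
        rw [hterm (φ n)]
        exact mul_nonneg (inv_nonneg.mpr (hdistpos (φ n)).le) (hDweak _ (hyT (φ n)).1 j)
      exact ge_of_tendsto' hlim hge
    have hf0a : f0 a ≤ 0 := by
      have hterm : ∀ n, f0 (dd n) = (dist (y n) x0)⁻¹ * (f0 (y n) - f0 x0) := by
        intro n
        rw [hdd]
        simp only []
        rw [_root_.map_smul, smul_eq_mul, map_sub]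
      have hlim : Tendsto (fun n => f0 (dd (φ n))) atTop (𝓝 (f0 a)) :=
        (f0.continuous_of_finiteDimensional.tendsto a).comp hconv
      have hle : ∀ n, f0 (dd (φ n)) ≤ 0 := by
        intro n
        rw [hterm (φ n)]
        refine mul_nonpos_iff.mpr (Or.inl ⟨?_, ?_⟩)
        · exact (inv_nonneg.mpr (hdistpos (φ n)).le)
        · exact sub_nonpos.mpr (show f0 (y (φ n)) ≤ f0 x0 from (hyT (φ n)).2)
      exact le_of_tendsto' hlim hle
    exact absurd (rec_pos hk hkN hf hf0 hx0 hbdd hane hkey) (not_lt.mpr hf0a)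
  obtain ⟨r, hr⟩ := hTsub
  have hTcompact : IsCompact T := (isCompact_closedBall x0 r).of_isClosed_subset hTclosed hr
  obtain ⟨x, hxT, hxmin⟩ := hTcompact.exists_isMinOn ⟨x0, hx0T⟩
    f0.continuous_of_finiteDimensional.continuousOn
  refine ⟨x, hxT.1, fun y hy => ?_⟩
  by_cases hcase : f0 y ≤ f0 x0
  · exact hxmin ⟨hy, hcase⟩
  · exact le_trans (hxmin hx0T) (le_of_not_ge hcase)

end MinSide
section VertexSide

variable {f0 : (Fin k → ℝ) →ₗ[ℝ] ℝ}

lemma vertex_domain (hk : 1 ≤ k) (hf : Generic f) (hf0 : GenericLin f f0)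
    {X : Fin k → ℝ} {S : Finset (Fin N)} (hS : S.card = k) (hX : ∀ j ∈ S, f j X = 0) :
    ∃ Δ, IsDomOf f f0 X Δ ∧ MemDplus f f0 Δ ∧ ∀ Δ', IsDomOf f f0 X Δ' → Δ' = Δ := by
  classical
  obtain ⟨c, hcne, hdec, hsurj⟩ := vertex_core hf hf0 hS hX
  set σ : Fin N → ℝ := fun j => if j ∈ S then c j else f j X with hσ
  have hσval : ∀ j ∈ S, σ j = c j := fun j hj => if_pos hj
  have hσval' : ∀ j ∉ S, σ j = f j X := fun j hj => if_neg hj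
  have hσne : ∀ j, σ j ≠ 0 := by
    intro j
    by_cases hj : j ∈ S
    · rw [hσval j hj]; exact hcne j hj
    · rw [hσval' j hj]; exact off_vertex_ne hf hS hX hj
  have hSne : S.Nonempty := Finset.card_pos.mp (by omega)
  -- the σ-cell
  set Δσ : Set (Fin k → ℝ) := {z | ∀ j, 0 < σ j * f j z} with hΔσ
  -- the positivity of f0 on the σ-cell
  have hgt : ∀ y ∈ Δσ, f0 X < f0 y := by
    intro y hy
    have hsum : 0 < ∑ j ∈ S, c j * f j y := by
      refine Finset.sum_pos (fun j hj => ?_) hSne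
      have := hy j
      rwa [hσval j hj] at this
    have := hdec y
    linarith
  -- a base point inside Δσ
  obtain ⟨d0, hd0⟩ := hsurj c
  have hS_part : ∀ t : ℝ, 0 < t → ∀ j ∈ S, 0 < σ j * f j (X + t • d0) := by
    intro t ht j hj
    rw [affApply_smul, hX j hj, hd0 j hj, hσval j hj, zero_add]
    have : c j * (t * c j) = t * (c j * c j) := by ring
    rw [this]
    exact mul_pos ht (mul_self_pos.mpr (hcne j hj))
  set T : Finset (Fin N) := Finset.univ.filter (fun j => j ∉ S) with hTdef
  have hoffpos : ∀ j ∈ T, 0 < σ j * f j X := by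
    intro j hj
    have hjS : j ∉ S := (Finset.mem_filter.mp hj).2
    rw [hσval' j hjS]
    exact mul_self_pos.mpr (off_vertex_ne hf hS hX hjS)
  have hoff : ∀ᶠ t : ℝ in 𝓝[>] 0, ∀ j ∈ T, 0 < σ j * f j (X + t • d0) :=
    eventually_pos_all hoffpos
  have hall : ∀ᶠ t : ℝ in 𝓝[>] 0, X + t • d0 ∈ Δσ := by
    filter_upwards [hoff, self_mem_nhdsWithin] with t h1 h2 j
    by_cases hj : j ∈ S
    · exact hS_part t h2 j hj
    · exact h1 j (Finset.mem_filter.mpr ⟨Finset.mem_univ j, hj⟩)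
  obtain ⟨t0, ht0⟩ := hall.exists
  set x1 : Fin k → ℝ := X + t0 • d0 with hx1
  have hx1mem : ∀ j, 0 < σ j * f j x1 := ht0
  have hx1ne : ∀ j, f j x1 ≠ 0 := by
    intro j h0
    have := hx1mem j
    rw [h0, mul_zero] at this
    exact lt_irrefl 0 this
  have hcell : Cell f Finset.univ x1 = Δσ := by
    ext z
    constructor
    · intro hz j
      exact (sign_transfer (mul_comm (σ j) (f j x1) ▸ hx1mem j) (f j z)).mp
        (hz j (Finset.mem_univ j))
    · intro hz j _
      exact (sign_transfer (mul_comm (σ j) (f j x1) ▸ hx1mem j) (f j z)).mpr (hz j)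
  set Δ := Cell f Finset.univ x1 with hΔ
  have hdom : IsDomain f Δ := isDomain_iff.mpr ⟨x1, hx1ne, rfl⟩
  have hXcl : X ∈ closure Δ := by
    rw [hΔ, closure_cell (fun j _ => hx1ne j)]
    intro j _
    by_cases hj : j ∈ S
    · rw [hX j hj, mul_zero]
    · have h1 : 0 < σ j * f j x1 := hx1mem j
      rw [hσval' j hj] at h1
      have : 0 < f j x1 * f j X := by nlinarith
      exact this.le
  have hgt' : ∀ y ∈ Δ, f0 X < f0 y := by
    intro y hy
    exact hgt y (hcell ▸ hy)
  have hdomof : IsDomOf f f0 X Δ := ⟨hdom, hXcl, hgt'⟩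
  refine ⟨Δ, hdomof, ⟨hdom, ⟨f0 X, ?_⟩⟩, ?_⟩
  · rintro v ⟨y, hy, rfl⟩
    exact (hgt' y hy).le
  · rintro Δ' ⟨hdom', hXcl', hpos'⟩
    obtain ⟨y1, hy1ne, rfl⟩ := isDomain_iff.mp hdom'
    rw [closure_cell (fun j _ => hy1ne j)] at hXcl'
    have hweak : ∀ j, 0 ≤ f j y1 * f j X := fun j => hXcl' j (Finset.mem_univ j)
    have hsign : ∀ j, 0 < σ j * f j y1 := by
      intro j
      by_cases hj : j ∈ S
      · rw [hσval j hj]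
        have hne0 : c j * f j y1 ≠ 0 := mul_ne_zero (hcne j hj) (hy1ne j)
        rcases hne0.lt_or_gt with hneg | hpos
        · exfalso
          set q := c j * f j y1 with hq
          set R := ∑ i ∈ S.erase j, c i * f i y1 with hR
          set M := (|R| + 1) / (-q) with hM
          have hMpos : 0 < M := div_pos (by positivity) (by linarith)
          set u : Fin N → ℝ := Function.update (fun i => f i y1) j (M * f j y1) with hu
          have huj : u j = M * f j y1 := by rw [hu]; simp
          have hui : ∀ i, i ≠ j → u i = f i y1 := by
            intro i hij
            rw [hu, Function.update_of_ne hij]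
          obtain ⟨d, hd⟩ := hsurj u
          have hin : ∀ t : ℝ, 0 < t → ∀ i ∈ S, 0 < f i y1 * f i (X + t • d) := by
            intro t ht i hi
            rw [affApply_smul, hX i hi, hd i hi, zero_add]
            by_cases hij : i = j
            · subst hij
              rw [huj]
              have : f i y1 * (t * (M * f i y1)) = t * M * (f i y1 * f i y1) := by ring
              rw [this]
              exact mul_pos (mul_pos ht hMpos) (mul_self_pos.mpr (hy1ne i))
            · rw [hui i hij]
              have : f i y1 * (t * f i y1) = t * (f i y1 * f i y1) := by ring
              rw [this]
              exact mul_pos ht (mul_self_pos.mpr (hy1ne i))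
          have hoffpos' : ∀ i ∈ T, 0 < f i y1 * f i X := by
            intro i hi
            have hiS : i ∉ S := (Finset.mem_filter.mp hi).2
            have hne : f i X ≠ 0 := off_vertex_ne hf hS hX hiS
            exact lt_of_le_of_ne (hweak i) (Ne.symm (mul_ne_zero (hy1ne i) hne))
          have hoff' : ∀ᶠ t : ℝ in 𝓝[>] 0, ∀ i ∈ T, 0 < f i y1 * f i (X + t • d) :=
            eventually_pos_all hoffpos'
          obtain ⟨t1, ht1, ht1pos⟩ := (hoff'.and self_mem_nhdsWithin).exists
          have ht1pos' : (0:ℝ) < t1 := ht1pos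
          have hmem : X + t1 • d ∈ Cell f Finset.univ y1 := by
            intro i _
            by_cases hiS : i ∈ S
            · exact hin t1 ht1pos' i hiS
            · exact ht1 i (Finset.mem_filter.mpr ⟨Finset.mem_univ i, hiS⟩)
          have hflt : f0 (X + t1 • d) < f0 X := by
            have hval : f0 (X + t1 • d) = f0 X + ∑ i ∈ S, c i * f i (X + t1 • d) :=
              hdec _
            have hsum : ∑ i ∈ S, c i * f i (X + t1 • d) = t1 * (M * q + R) := by
              have hterm : ∀ i ∈ S, c i * f i (X + t1 • d) = t1 * (c i * u i) := by
                intro i hi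
                rw [affApply_smul, hX i hi, hd i hi, zero_add]
                ring
              rw [Finset.sum_congr rfl hterm, ← Finset.mul_sum]
              congr 1
              rw [← Finset.add_sum_erase _ _ hj, huj]
              have hRe : ∑ i ∈ S.erase j, c i * u i = R := by
                refine Finset.sum_congr rfl fun i hi => ?_
                rw [hui i (Finset.ne_of_mem_erase hi)]
              rw [hRe, hq]
              ring
            have hqne : -q ≠ 0 := by
              have : (0:ℝ) < -q := by linarith
              exact this.ne'
            have hMq : M * q = -(|R| + 1) := by
              calc M * q = -((|R| + 1) * (-q)⁻¹ * (-q)) := by rw [hM, division_def]; ring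
              _ = -(|R| + 1) := by rw [mul_assoc, inv_mul_cancel₀ hqne, mul_one]
            have hMqR : M * q + R < 0 := by
              rw [hMq]
              have := le_abs_self R
              linarith
            rw [hval, hsum]
            nlinarith
          exact absurd (hpos' _ hmem) (not_lt.mpr hflt.le)
        · exact hpos
      · rw [hσval' j hj]
        have hne : f j X ≠ 0 := off_vertex_ne hf hS hX hj
        have := lt_of_le_of_ne (hweak j) (Ne.symm (mul_ne_zero (hy1ne j) hne))
        nlinarith
    ext z
    constructor
    · intro hz
      rw [hΔ]
      intro j hjuniv
      exact (sign_transfer (mul_comm (σ j) (f j x1) ▸ hx1mem j) (f j z)).mpr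
        ((sign_transfer (mul_comm (σ j) (f j y1) ▸ hsign j) (f j z)).mp (hz j hjuniv))
    · intro hz j hjuniv
      exact (sign_transfer (mul_comm (σ j) (f j y1) ▸ hsign j) (f j z)).mpr
        ((sign_transfer (mul_comm (σ j) (f j x1) ▸ hx1mem j) (f j z)).mp (hz j hjuniv))

end VertexSide

/-- (i) every `Δ ∈ 𝒟⁺` has a unique minimizer of `f0` on its closure, and
this minimizer is a vertex `X(Δ)`; (ii) every vertex `X` has a unique arrangement domain
`Δ_X` whose closure contains `X` and on which `f0 - f0 X > 0`, and `Δ_X ∈ 𝒟⁺`;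
(iii) the maps `Δ ↦ X(Δ)` and `X ↦ Δ_X` are mutually inverse bijections between `𝒟⁺`
and the set of vertices. -/
theorem stmt_7 {k N : ℕ} (hk : 1 ≤ k) (hkN : k ≤ N)
    (f : Fin N → ((Fin k → ℝ) →ᵃ[ℝ] ℝ)) (hf : Generic f)
    (f0 : (Fin k → ℝ) →ₗ[ℝ] ℝ) (hf0 : GenericLin f f0) :
    (∀ Δ : Set (Fin k → ℝ), MemDplus f f0 Δ →
      (∃! x : Fin k → ℝ, x ∈ closure Δ ∧ ∀ y ∈ closure Δ, f0 x ≤ f0 y) ∧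
      (∀ x : Fin k → ℝ, (x ∈ closure Δ ∧ ∀ y ∈ closure Δ, f0 x ≤ f0 y) →
        IsVertex f x)) ∧
    (∀ X : Fin k → ℝ, IsVertex f X →
      (∃! Δ : Set (Fin k → ℝ), IsDomOf f f0 X Δ) ∧
      (∀ Δ : Set (Fin k → ℝ), IsDomOf f f0 X Δ → MemDplus f f0 Δ)) ∧
    (∀ (Δ : Set (Fin k → ℝ)) (x : Fin k → ℝ), MemDplus f f0 Δ →
      (x ∈ closure Δ ∧ ∀ y ∈ closure Δ, f0 x ≤ f0 y) → IsDomOf f f0 x Δ) ∧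
    (∀ (X : Fin k → ℝ) (Δ : Set (Fin k → ℝ)), IsVertex f X → IsDomOf f f0 X Δ →
      X ∈ closure Δ ∧ ∀ y ∈ closure Δ, f0 X ≤ f0 y) := by
  have partI : ∀ Δ : Set (Fin k → ℝ), MemDplus f f0 Δ →
      (∃ x ∈ closure Δ, ∀ y ∈ closure Δ, f0 x ≤ f0 y) ∧
      (∀ x, (x ∈ closure Δ ∧ ∀ y ∈ closure Δ, f0 x ≤ f0 y) → IsVertex f x) := by
    rintro Δ ⟨hdom, hbdd⟩
    obtain ⟨x0, hx0, rfl⟩ := isDomain_iff.mp hdom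
    exact ⟨exists_min hk hkN hf hf0 hx0 hbdd,
      fun x hx => min_is_vertex hk hkN hf hf0 hx0 hx.1 hx.2⟩
  refine ⟨?_, ?_, ?_, ?_⟩
  · intro Δ hΔ
    obtain ⟨hex, hvert⟩ := partI Δ hΔ
    obtain ⟨x, hx1, hx2⟩ := hex
    refine ⟨⟨x, ⟨hx1, hx2⟩, ?_⟩, fun x' hx' => hvert x' hx'⟩
    rintro y ⟨hy1, hy2⟩
    by_contra hne
    have h1 : IsVertex f y := hvert y ⟨hy1, hy2⟩
    have h2 : IsVertex f x := hvert x ⟨hx1, hx2⟩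
    have heq : f0 y = f0 x := le_antisymm (hy2 x hx1) (hx2 y hy1)
    exact hf0.1 y x h1 h2 hne heq
  · intro X hX
    obtain ⟨S, hS, hXS⟩ := hX
    obtain ⟨Δ, hdomof, hplus, huniq⟩ := vertex_domain hk hf hf0 hS hXS
    refine ⟨⟨Δ, hdomof, fun Δ' h' => huniq Δ' h'⟩, ?_⟩
    intro Δ' h'
    rw [huniq Δ' h']
    exact hplus
  · intro Δ x hΔ hx
    obtain ⟨hdom, hbdd⟩ := hΔ
    refine ⟨hdom, hx.1, ?_⟩
    intro y hy
    have hle : f0 x ≤ f0 y := hx.2 y (subset_closure hy)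
    rcases hle.lt_or_eq with h | h
    · exact h
    · exfalso
      have hymin : ∀ z ∈ closure Δ, f0 y ≤ f0 z := fun z hz => by
        rw [← h]; exact hx.2 z hz
      have hyvert : IsVertex f y := (partI Δ ⟨hdom, hbdd⟩).2 y ⟨subset_closure hy, hymin⟩
      obtain ⟨S, hS, hySz⟩ := hyvert
      have hSne : S.Nonempty := Finset.card_pos.mp (by omega)
      obtain ⟨j, hj⟩ := hSne
      obtain ⟨x0, hx0, rfl⟩ := isDomain_iff.mp hdom
      have hne : f j y ≠ 0 := by
        intro h0
        have := hy j (Finset.mem_univ j)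
        rw [h0, mul_zero] at this
        exact lt_irrefl 0 this
      exact hne (hySz j hj)
  · intro X Δ _ hdomof
    refine ⟨hdomof.2.1, ?_⟩
    intro y hy
    have hsub : Δ ⊆ {z | f0 X ≤ f0 z} := fun z hz => (hdomof.2.2 z hz).le
    have hcl : closure Δ ⊆ {z | f0 X ≤ f0 z} :=
      closure_minimal hsub (isClosed_le continuous_const f0.continuous_of_finiteDimensional)
    exact hcl hy

end HypArr
end
end

section
/- Let X be a vertex, with index set also denoted X. Among the 2^k connected components of ℝ^k ∖ ∪_{j∈X} H_j there is exactly one on which f_0 − f_0(X) is everywhere positive, and this component equals the open cone {X + Σ_{j∈X} a_j e_{X∖{j}} : a_j > 0 for all j ∈ X}. -/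
open Set MeasureTheory Filter
open scoped Classical Real

noncomputable section

namespace HypArr

variable {k N : ℕ}

lemma affine_add' (g : (Fin k → ℝ) →ᵃ[ℝ] ℝ) (x v : Fin k → ℝ) :
    g (x + v) = g x + g.linear v := by
  have := g.map_vadd x v
  simpa [add_comm] using this

lemma affine_cont' (g : (Fin k → ℝ) →ᵃ[ℝ] ℝ) : Continuous fun z => g z := by
  rw [AffineMap.decomp g]
  exact (g.linear.continuous_of_finiteDimensional).add continuous_const

lemma affine_combo' (g : (Fin k → ℝ) →ᵃ[ℝ] ℝ) (x y : Fin k → ℝ) (a b : ℝ)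
    (hab : a + b = 1) : g (a • x + b • y) = a * g x + b * g y := by
  have h : ∀ z : Fin k → ℝ, g z = g.linear z + g 0 := by
    intro z
    have := affine_add' g 0 z
    simpa [add_comm] using this
  rw [h (a • x + b • y), h x, h y, map_add, LinearMap.map_smul, LinearMap.map_smul]
  simp only [smul_eq_mul]
  linear_combination (-(g 0)) * hab

lemma box_comp' (f : Fin N → ((Fin k → ℝ) →ᵃ[ℝ] ℝ)) (Sx : Finset (Fin N))
    (r : Fin N → ℝ) (y : Fin k → ℝ)
    (hy : ∀ j ∈ Sx, 0 < r j * f j y) :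
    connectedComponentIn {z | ∀ j ∈ Sx, f j z ≠ 0} y
      = {z | ∀ j ∈ Sx, 0 < r j * f j z} := by
  set Ω : Set (Fin k → ℝ) := {z | ∀ j ∈ Sx, f j z ≠ 0} with hΩ
  set B : Set (Fin k → ℝ) := {z | ∀ j ∈ Sx, 0 < r j * f j z} with hB
  have hBΩ : B ⊆ Ω := by
    intro z hz j hj
    intro h0
    have := hz j hj
    rw [h0, mul_zero] at this
    exact lt_irrefl 0 this
  have hyB : y ∈ B := hy
  have hyΩ : y ∈ Ω := hBΩ hyB
  have hBconv : Convex ℝ B := by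
    intro x hx z hz a b ha hb hab
    intro j hj
    have hcombo := affine_combo' (f j) x z a b hab
    have h1 : 0 < r j * f j x := hx j hj
    have h2 : 0 < r j * f j z := hz j hj
    have : r j * f j (a • x + b • z) = a * (r j * f j x) + b * (r j * f j z) := by
      rw [hcombo]; ring
    rw [this]
    rcases eq_or_lt_of_le ha with ha0 | ha0
    · have hb1 : b = 1 := by linarith
      rw [← ha0, hb1]; simpa using h2
    · have : 0 ≤ b * (r j * f j z) := mul_nonneg hb h2.le
      nlinarith
  have hBopen : IsOpen B := by
    have : B = ⋂ j ∈ Sx, {z : Fin k → ℝ | 0 < r j * f j z} := by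
      ext z; simp [hB]
    rw [this]
    refine isOpen_biInter_finset fun j hj => ?_
    exact isOpen_lt continuous_const ((continuous_const.mul (affine_cont' (f j))))
  apply Subset.antisymm
  · set D : Set (Fin k → ℝ) := ⋃ j ∈ Sx, {z : Fin k → ℝ | r j * f j z < 0} with hD
    have hDopen : IsOpen D := by
      refine isOpen_biUnion fun j hj => ?_
      exact isOpen_lt ((continuous_const.mul (affine_cont' (f j)))) continuous_const
    have hdisj : Disjoint B D := by
      rw [Set.disjoint_left]
      intro z hz hzD
      simp only [hD, mem_iUnion, mem_setOf_eq] at hzD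
      obtain ⟨j, hj, hlt⟩ := hzD
      exact absurd (hz j hj) (not_lt.2 hlt.le)
    have hr : ∀ j ∈ Sx, r j ≠ 0 := by
      intro j hj h0
      have := hy j hj
      rw [h0, zero_mul] at this
      exact lt_irrefl 0 this
    have hΩsub : Ω ⊆ B ∪ D := by
      intro z hz
      by_cases hzB : z ∈ B
      · exact Or.inl hzB
      · right
        simp only [hB, mem_setOf_eq, not_forall] at hzB
        obtain ⟨j, hj, hle⟩ := hzB
        have hne : r j * f j z ≠ 0 := mul_ne_zero (hr j hj) (hz j hj)
        simp only [hD, mem_iUnion, mem_setOf_eq]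
        exact ⟨j, hj, lt_of_le_of_ne (not_lt.1 hle) hne⟩
    have hpc := isPreconnected_connectedComponentIn (x := y) (F := Ω)
    have hsub : connectedComponentIn Ω y ⊆ Ω := connectedComponentIn_subset Ω y
    have hmem : y ∈ connectedComponentIn Ω y := mem_connectedComponentIn hyΩ
    exact hpc.subset_left_of_subset_union hBopen hDopen hdisj
      (hsub.trans hΩsub) ⟨y, hmem, hyB⟩
  · exact hBconv.isPreconnected.subset_connectedComponentIn hyB hBΩ

/-- among the connected components of `ℝ^k ∖ ⋃_{j ∈ X} H j` there is
exactly one on which `f0 - f0 X` is everywhere positive, and it equals the open cone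
`{X + ∑_{j ∈ X} a j • e_{X∖{j}} : a j > 0}`. -/
theorem stmt_8 {k N : ℕ} (hk : 1 ≤ k) (hkN : k ≤ N)
    (f : Fin N → ((Fin k → ℝ) →ᵃ[ℝ] ℝ)) (hf : Generic f)
    (f0 : (Fin k → ℝ) →ₗ[ℝ] ℝ) (hf0 : GenericLin f f0)
    (Sx : Finset (Fin N)) (X : Fin k → ℝ) (hX : IsVertexOf f Sx X)
    (e : Fin N → (Fin k → ℝ))
    (he : ∀ j ∈ Sx, (∀ i ∈ Sx.erase j, (f i).linear (e j) = 0) ∧ f0 (e j) = 1) :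
    (∃! C : Set (Fin k → ℝ), IsConeComp f Sx C ∧ ∀ y ∈ C, f0 X < f0 y) ∧
    (∀ C : Set (Fin k → ℝ), (IsConeComp f Sx C ∧ ∀ y ∈ C, f0 X < f0 y) →
      C = {z : Fin k → ℝ | ∃ a : Fin N → ℝ, (∀ j ∈ Sx, 0 < a j) ∧
        z = X + ∑ j ∈ Sx, a j • e j}) := by
  obtain ⟨hcard, hXz⟩ := hX
  have hSne : Sx.Nonempty := Finset.card_pos.1 (by omega)
  set c : Fin N → ℝ := fun j => (f j).linear (e j) with hc_def
  obtain ⟨x0, hx0, hx0u⟩ := hf.2.1 Sx hcard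
  have huniq : ∀ v : Fin k → ℝ, (∀ i ∈ Sx, (f i).linear v = 0) → v = 0 := by
    intro v hv
    have h1 : X = x0 := hx0u X hXz
    have h2 : X + v = x0 := hx0u (X + v) (by
      intro i hi
      rw [affine_add', hXz i hi, hv i hi, add_zero])
    have h3 : X + v = X := h2.trans h1.symm
    have := congrArg (fun w => w - X) h3
    simpa using this
  have hc : ∀ j ∈ Sx, c j ≠ 0 := by
    intro j hj h0
    have hlin : ∀ i ∈ Sx, (f i).linear (e j) = 0 := by
      intro i hi
      by_cases hij : i = j
      · rw [hij]; exact h0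
      · exact (he j hj).1 i (Finset.mem_erase.2 ⟨hij, hi⟩)
    have hz := huniq (e j) hlin
    have h1 : f0 (e j) = 1 := (he j hj).2
    rw [hz] at h1; simp at h1
  have hsum : ∀ b : Fin N → ℝ, ∀ i ∈ Sx,
      f i (X + ∑ j ∈ Sx, b j • e j) = b i * c i := by
    intro b i hi
    rw [affine_add', hXz i hi, zero_add, map_sum]
    rw [Finset.sum_eq_single_of_mem i hi]
    · rw [LinearMap.map_smul]; simp [hc_def]
    · intro j hj hji
      rw [LinearMap.map_smul]
      have hz : (f i).linear (e j) = 0 :=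
        (he j hj).1 i (Finset.mem_erase.2 ⟨hji.symm, hi⟩)
      rw [hz]; simp
  have hf0sum : ∀ b : Fin N → ℝ,
      f0 (X + ∑ j ∈ Sx, b j • e j) = f0 X + ∑ j ∈ Sx, b j := by
    intro b
    rw [map_add, map_sum]
    congr 1
    refine Finset.sum_congr rfl fun j hj => ?_
    rw [LinearMap.map_smul, (he j hj).2]; simp
  have hrep : ∀ z : Fin k → ℝ, z = X + ∑ j ∈ Sx, ((c j)⁻¹ * f j z) • e j := by
    intro z
    set s := ∑ j ∈ Sx, ((c j)⁻¹ * f j z) • e j with hs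
    have hv : ∀ i ∈ Sx, (f i).linear (z - (X + s)) = 0 := by
      intro i hi
      have h2 : f i ((X + s) + (z - (X + s))) = f i (X + s) + (f i).linear (z - (X + s)) :=
        affine_add' _ _ _
      have h0 : (X + s) + (z - (X + s)) = z := by abel
      rw [h0] at h2
      have h3 : f i (X + s) = ((c i)⁻¹ * f i z) * c i := hsum _ i hi
      have h4 : ((c i)⁻¹ * f i z) * c i = f i z := by field_simp [hc i hi]
      rw [h3, h4] at h2
      linarith
    have hv0 := huniq _ hv
    have : z - (X + s) = 0 := hv0
    have := sub_eq_zero.1 this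
    exact this
  set Ω : Set (Fin k → ℝ) := {z | ∀ j ∈ Sx, f j z ≠ 0} with hΩ
  set Cpos : Set (Fin k → ℝ) := {z | ∀ j ∈ Sx, 0 < (c j)⁻¹ * f j z} with hCpos
  have hposCpos : ∀ z ∈ Cpos, f0 X < f0 z := by
    intro z hz
    have h1 : f0 z = f0 X + ∑ j ∈ Sx, ((c j)⁻¹ * f j z) := by
      calc f0 z = f0 (X + ∑ j ∈ Sx, ((c j)⁻¹ * f j z) • e j) := by rw [← hrep z]
      _ = _ := hf0sum _
    have h2 : 0 < ∑ j ∈ Sx, ((c j)⁻¹ * f j z) :=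
      Finset.sum_pos (fun j hj => hz j hj) hSne
    linarith
  set z0 : Fin k → ℝ := X + ∑ j ∈ Sx, (1 : ℝ) • e j with hz0_def
  have hz0val : ∀ j ∈ Sx, f j z0 = c j := by
    intro j hj
    have h := hsum (fun _ => (1:ℝ)) j hj
    simp only [one_mul] at h
    exact h
  have hz0B : ∀ j ∈ Sx, 0 < (c j)⁻¹ * f j z0 := by
    intro j hj
    rw [hz0val j hj, inv_mul_cancel₀ (hc j hj)]
    norm_num
  have hz0Ω : ∀ j ∈ Sx, f j z0 ≠ 0 := by
    intro j hj
    rw [hz0val j hj]; exact hc j hj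
  have hCposComp : connectedComponentIn Ω z0 = Cpos :=
    box_comp' f Sx (fun j => (c j)⁻¹) z0 hz0B
  -- explicit description
  have hExpl : Cpos = {z : Fin k → ℝ | ∃ a : Fin N → ℝ, (∀ j ∈ Sx, 0 < a j) ∧
      z = X + ∑ j ∈ Sx, a j • e j} := by
    ext z
    constructor
    · intro hz
      exact ⟨fun j => (c j)⁻¹ * f j z, hz, hrep z⟩
    · rintro ⟨a, hapos, rfl⟩
      intro j hj
      rw [hsum a j hj]
      have h4 : (c j)⁻¹ * (a j * c j) = a j := by
        field_simp [hc j hj]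
      rw [h4]
      exact hapos j hj
  -- uniqueness
  have huniqC : ∀ C : Set (Fin k → ℝ),
      (IsConeComp f Sx C ∧ ∀ y ∈ C, f0 X < f0 y) → C = Cpos := by
    rintro C ⟨⟨y, hyΩ, hC⟩, hpos⟩
    set a : Fin N → ℝ := fun j => (c j)⁻¹ * f j y with ha_def
    have ha : ∀ j ∈ Sx, a j ≠ 0 := fun j hj =>
      mul_ne_zero (inv_ne_zero (hc j hj)) (hyΩ j hj)
    by_cases hall : ∀ j ∈ Sx, 0 < a j
    · rw [hC]
      exact box_comp' f Sx (fun j => (c j)⁻¹) y hall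
    · exfalso
      push_neg at hall
      obtain ⟨j0, hj0, hle⟩ := hall
      have hj0neg : a j0 < 0 := lt_of_le_of_ne hle (ha j0 hj0)
      set r : Fin N → ℝ := fun j => a j * (c j)⁻¹ with hr_def
      have hry : ∀ j ∈ Sx, 0 < r j * f j y := by
        intro j hj
        have heq : r j * f j y = a j * a j := by
          simp only [hr_def, ha_def]; ring
        rw [heq]
        exact mul_self_pos.2 (ha j hj)
      have hCbox : C = {z | ∀ j ∈ Sx, 0 < r j * f j z} := by
        rw [hC]; exact box_comp' f Sx r y hry
      have hyC : y ∈ C := by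
        rw [hC]; exact mem_connectedComponentIn hyΩ
      have hfy : f0 X < f0 y := hpos y hyC
      set M : ℝ := f0 y - f0 X + 1 with hM_def
      have hM : 0 < M := by simp only [hM_def]; linarith
      set b : Fin N → ℝ := fun j => a j - (if j = j0 then M else 0) with hb_def
      set w : Fin k → ℝ := X + ∑ j ∈ Sx, b j • e j with hw_def
      have hwC : w ∈ C := by
        rw [hCbox]
        intro j hj
        have hfw : f j w = b j * c j := hsum b j hj
        have heq : r j * f j w = a j * b j := by
          rw [hfw]
          simp only [hr_def]
          field_simp [hc j hj]
        rw [heq]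
        by_cases hjj : j = j0
        · subst hjj
          have hbneg : b j = a j - M := by simp [hb_def]
          rw [hbneg]
          exact mul_pos_of_neg_of_neg hj0neg (by linarith)
        · have hbeq : b j = a j := by simp [hb_def, hjj]
          rw [hbeq]
          exact mul_self_pos.2 (ha j hj)
      have h1 : f0 w = f0 X + ∑ j ∈ Sx, b j := hf0sum b
      have h2 : ∑ j ∈ Sx, b j = (∑ j ∈ Sx, a j) - M := by
        simp only [hb_def]
        rw [Finset.sum_sub_distrib]
        congr 1
        rw [Finset.sum_ite_eq' Sx j0 (fun _ => M)]
        simp [hj0]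
      have h3 : f0 y = f0 X + ∑ j ∈ Sx, a j := by
        calc f0 y = f0 (X + ∑ j ∈ Sx, a j • e j) := by
              conv_lhs => rw [hrep y]
          _ = _ := hf0sum _
      have h5 := hpos w hwC
      rw [h1, h2] at h5
      simp only [hM_def] at h5
      linarith
  constructor
  · refine ⟨Cpos, ⟨⟨z0, hz0Ω, hCposComp.symm⟩, hposCpos⟩, fun C hC => huniqC C hC⟩
  · intro C hC
    rw [huniqC C hC, hExpl]



end HypArr
end
end

section
/- For every vertex X and every point x in the closure of the cone C⁺_X with x ≠ X, one has f_0(x) > f_0(X). In particular, every vertex X' lying in the closure of C⁺_X and distinct from X satisfies f_0(X') > f_0(X). -/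
open Set MeasureTheory Filter
open scoped Classical Real

noncomputable section

namespace HypArr

variable {k N : ℕ}

/-- For every vertex `X` and every point `x` in the closure of the cone
`C⁺_X` with `x ≠ X`, one has `f0 x > f0 X`; in particular every vertex `X'` lying in
the closure of `C⁺_X` and distinct from `X` satisfies `f0 X' > f0 X`. -/
theorem stmt_9 {k N : ℕ} (hk : 1 ≤ k) (hkN : k ≤ N)
    (f : Fin N → ((Fin k → ℝ) →ᵃ[ℝ] ℝ)) (hf : Generic f)
    (f0 : (Fin k → ℝ) →ₗ[ℝ] ℝ) (hf0 : GenericLin f f0)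
    (Sx : Finset (Fin N)) (X : Fin k → ℝ) (hX : IsVertexOf f Sx X)
    (C : Set (Fin k → ℝ)) (hC : IsPosCone f f0 Sx X C) :
    (∀ x ∈ closure C, x ≠ X → f0 X < f0 x) ∧
    (∀ X' : Fin k → ℝ, IsVertex f X' → X' ∈ closure C → X' ≠ X → f0 X < f0 X') := by
  classical
  obtain ⟨hcard, hvan⟩ := hX
  obtain ⟨⟨y₀, hy₀, hCeq⟩, hCpos⟩ := hC
  suffices main : ∀ x ∈ closure C, x ≠ X → f0 X < f0 x by
    exact ⟨main, fun X' _ h1 h2 => main X' h1 h2⟩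
  intro x hxcl hxX
  set D : Set (Fin k → ℝ) := {z | ∀ j ∈ Sx, f j z ≠ 0} with hD
  set O : Set (Fin k → ℝ) := {z | ∀ j ∈ Sx, 0 < (f j y₀)⁻¹ * f j z} with hOdef
  have hcont : ∀ j : Fin N, Continuous (f j) := fun j =>
    (f j).continuous_of_finiteDimensional
  have hy₀D : y₀ ∈ D := hy₀
  have hy₀O : y₀ ∈ O := by
    intro j hj
    rw [inv_mul_cancel₀ (hy₀ j hj)]
    exact one_pos
  have hOD : O ⊆ D := by
    intro z hz j hj
    intro h0
    have := hz j hj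
    rw [h0, mul_zero] at this
    exact lt_irrefl 0 this
  have hOconv : Convex ℝ O := by
    intro z hz w hw a b ha hb hab
    intro j hj
    have hcombo : f j (a • z + b • w) = a • f j z + b • f j w :=
      Convex.combo_affine_apply hab
    rw [hcombo]
    have h1 := hz j hj
    have h2 := hw j hj
    simp only [smul_eq_mul]
    have hgoal : ((f j) y₀)⁻¹ * (a * (f j) z + b * (f j) w) =
        a * (((f j) y₀)⁻¹ * (f j) z) + b * (((f j) y₀)⁻¹ * (f j) w) := by ring
    rw [hgoal]
    rcases eq_or_lt_of_le ha with h | h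
    · have hb1 : b = 1 := by linarith
      rw [← h, hb1]
      simpa using h2
    · nlinarith [mul_nonneg hb h2.le, mul_pos h h1]
  have hOopen : IsOpen O := by
    have : O = ⋂ j ∈ Sx, {z | 0 < (f j y₀)⁻¹ * f j z} := by
      ext z; simp [hOdef]
    rw [this]
    exact isOpen_biInter_finset fun j _ =>
      isOpen_lt continuous_const (continuous_const.mul (hcont j))
  have hy₀C : y₀ ∈ C := by
    rw [hCeq]; exact mem_connectedComponentIn hy₀D
  have hOC : O ⊆ C := by
    rw [hCeq]
    exact (hOconv.isPreconnected).subset_connectedComponentIn hy₀O hOD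
  have hCO : C ⊆ O := by
    intro z hz j hj
    by_contra hle
    push_neg at hle
    have hCpre : IsPreconnected C := by
      rw [hCeq]; exact isPreconnected_connectedComponentIn
    have hCD : C ⊆ D := by rw [hCeq]; exact connectedComponentIn_subset D y₀
    have hfz : f j z ≠ 0 := hCD hz j hj
    have hcne : (f j y₀)⁻¹ * f j z ≠ 0 :=
      mul_ne_zero (inv_ne_zero (hy₀ j hj)) hfz
    have hlt : (f j y₀)⁻¹ * f j z < 0 := lt_of_le_of_ne hle hcne
    have hcont2 : ContinuousOn (fun w => (f j y₀)⁻¹ * f j w) C :=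
      (continuous_const.mul (hcont j)).continuousOn
    have h01 : (0 : ℝ) ∈ Set.Icc ((f j y₀)⁻¹ * f j z) ((f j y₀)⁻¹ * f j y₀) := by
      constructor
      · exact le_of_lt hlt
      · rw [inv_mul_cancel₀ (hy₀ j hj)]; exact zero_le_one
    obtain ⟨w, hwC, hw0⟩ := hCpre.intermediate_value hz hy₀C hcont2 h01
    have : f j w ≠ 0 := hCD hwC j hj
    have : (f j y₀)⁻¹ * f j w ≠ 0 := mul_ne_zero (inv_ne_zero (hy₀ j hj)) this
    exact this hw0
  have hclos : ∀ z ∈ closure C, ∀ j ∈ Sx, 0 ≤ (f j y₀)⁻¹ * f j z := by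
    have hcl : IsClosed {z : Fin k → ℝ | ∀ j ∈ Sx, 0 ≤ (f j y₀)⁻¹ * f j z} := by
      have : {z : Fin k → ℝ | ∀ j ∈ Sx, 0 ≤ (f j y₀)⁻¹ * f j z} =
          ⋂ j ∈ Sx, {z | 0 ≤ (f j y₀)⁻¹ * f j z} := by
        ext z; simp
      rw [this]
      exact isClosed_biInter fun j _ =>
        isClosed_le continuous_const (continuous_const.mul (hcont j))
    intro z hz
    exact closure_minimal (fun w hw j hj => le_of_lt (hCO hw j hj)) hcl hz
  have huniq := hf.2.1 Sx hcard
  by_cases hall : ∀ j ∈ Sx, f j x = 0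
  · exact absurd (huniq.unique hall hvan) hxX
  push_neg at hall
  obtain ⟨j0, hj0S, hj0ne⟩ := hall
  -- Linear algebra: the linear parts of `f j`, `j ∈ Sx`, form a basis of the dual.
  set L : (Fin k → ℝ) →ₗ[ℝ] (↥Sx → ℝ) := LinearMap.pi fun j => (f j.1).linear with hLdef
  have hLker : ∀ v, L v = 0 → v = 0 := by
    intro v hv
    have h1 : ∀ j ∈ Sx, f j (v + X) = 0 := by
      intro j hj
      have hlin : (f j).linear v = 0 := congrFun hv ⟨j, hj⟩
      have := (f j).map_vadd X v
      simp only [vadd_eq_add] at this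
      rw [this, hlin, hvan j hj, zero_add]
    have h2 := huniq.unique h1 hvan
    exact add_right_cancel (h2.trans (zero_add X).symm)
  have hLinj : Function.Injective L := by
    intro v w h
    have : v - w = 0 := hLker _ (by rw [map_sub, h, sub_self])
    exact sub_eq_zero.mp this
  have hfr : Module.finrank ℝ (Fin k → ℝ) = Module.finrank ℝ (↥Sx → ℝ) := by
    rw [Module.finrank_pi, Module.finrank_pi, Fintype.card_coe, Fintype.card_fin, hcard]
  set E := L.linearEquivOfInjective hLinj hfr with hEdef
  have hEapp : ∀ (v : Fin k → ℝ) (i : ↥Sx), E v i = (f i.1).linear v := fun v i => rfl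
  set a : ↥Sx → ℝ := fun i => f0 (E.symm fun j => if i = j then 1 else 0) with hadef
  have hdecomp : ∀ v : Fin k → ℝ, f0 v = ∑ i : ↥Sx, (f i.1).linear v * a i := by
    intro v
    have h0 : f0 v = (f0 ∘ₗ (E.symm : (↥Sx → ℝ) ≃ₗ[ℝ] (Fin k → ℝ)).toLinearMap) (E v) := by
      simp
    rw [h0, LinearMap.pi_apply_eq_sum_univ]
    apply Finset.sum_congr rfl
    intro i _
    rw [hEapp]
    simp [hadef, mul_comm]
  set b : ↥Sx → ℝ := fun i => f i.1 y₀ * a i with hbdef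
  have hcone_pt : ∀ s : ℝ, 0 < s → ∀ i : ↥Sx, 0 < s * (∑ i' : ↥Sx, b i') + b i := by
    intro s hs i
    set u : ↥Sx → ℝ := fun i' => f i'.1 y₀ * (s + if i' = i then 1 else 0) with hudef
    set w := E.symm u with hwdef
    have hEw : E w = u := E.apply_symm_apply u
    have hwO : X + w ∈ O := by
      intro j hj
      have hfval : f j (X + w) = u ⟨j, hj⟩ := by
        have h1 := (f j).map_vadd X w
        simp only [vadd_eq_add] at h1
        rw [add_comm X w, h1, hvan j hj, add_zero]
        have h3 := congrFun hEw ⟨j, hj⟩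
        rw [← h3]
        exact (hEapp w ⟨j, hj⟩).symm
      rw [hfval, hudef]
      simp only
      rw [← mul_assoc, inv_mul_cancel₀ (hy₀ j hj), one_mul]
      by_cases h : (⟨j, hj⟩ : ↥Sx) = i <;> simp [h] <;> linarith
    have hlt := hCpos (X + w) (hOC hwO)
    have hf0w : 0 < f0 w := by
      rw [map_add] at hlt; linarith
    rw [hdecomp w] at hf0w
    have hsum : ∑ i' : ↥Sx, (f i'.1).linear w * a i' =
        s * (∑ i' : ↥Sx, b i') + b i := by
      have h1 : ∀ i' : ↥Sx, (f i'.1).linear w * a i' =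
          s * b i' + (if i' = i then b i' else 0) := by
        intro i'
        have h2 : (f i'.1).linear w = u i' := by rw [← hEapp w i', hEw]
        rw [h2, hudef]
        simp only [hbdef]
        by_cases h : i' = i <;> simp [h] <;> ring
      rw [Finset.sum_congr rfl fun i' _ => h1 i', Finset.sum_add_distrib,
        ← Finset.mul_sum, Finset.sum_ite_eq' Finset.univ i b]
      simp
    rw [hsum] at hf0w
    exact hf0w
  have hb : ∀ i : ↥Sx, 0 ≤ b i := by
    intro i
    by_contra hneg
    push_neg at hneg
    set B := ∑ i' : ↥Sx, b i' with hBdef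
    rcases le_or_gt B 0 with hB | hB
    · have := hcone_pt 1 one_pos i
      nlinarith
    · have hspos : 0 < -(b i) / (2 * B) := div_pos (by linarith) (by linarith)
      have := hcone_pt (-(b i) / (2 * B)) hspos i
      have heq : (-(b i) / (2 * B)) * B = -(b i) / 2 := by
        field_simp
      rw [heq] at this
      linarith
  have haj0 : a ⟨j0, hj0S⟩ ≠ 0 := by
    intro ha0
    obtain ⟨hdist, hline⟩ := hf0
    obtain ⟨p, q, hp, hq, hpq⟩ := hline (Sx.erase j0)
      (by rw [Finset.card_erase_of_mem hj0S, hcard])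
    apply hpq
    have hzero : f0 p - f0 q = 0 := by
      rw [← map_sub, hdecomp (p - q)]
      apply Finset.sum_eq_zero
      intro i _
      rcases eq_or_ne i.1 j0 with h | h
      · have hii : (⟨j0, hj0S⟩ : ↥Sx) = i := Subtype.ext h.symm
        rw [← hii, ha0, mul_zero]
      · have hiU : i.1 ∈ Sx.erase j0 := Finset.mem_erase.2 ⟨h, i.2⟩
        have hls : (f i.1).linear (p - q) = f i.1 p - f i.1 q := by
          have := (f i.1).linearMap_vsub p q
          simpa using this
        rw [hls, hp _ hiU, hq _ hiU, sub_zero, zero_mul]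
    linarith
  -- final computation
  have hxX' : f0 x - f0 X = ∑ i : ↥Sx, ((f i.1 y₀)⁻¹ * f i.1 x) * b i := by
    rw [← map_sub, hdecomp (x - X)]
    apply Finset.sum_congr rfl
    intro i _
    have h1 : (f i.1).linear (x - X) = f i.1 x := by
      have := (f i.1).linearMap_vsub x X
      simp only [vsub_eq_sub] at this
      rw [this, hvan i.1 i.2, sub_zero]
    rw [h1, hbdef]
    have hne := hy₀ i.1 i.2
    field_simp
  have hterm : ∀ i : ↥Sx, 0 ≤ ((f i.1 y₀)⁻¹ * f i.1 x) * b i := fun i =>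
    mul_nonneg (hclos x hxcl i.1 i.2) (hb i)
  have hj0term : 0 < ((f j0 y₀)⁻¹ * f j0 x) * b ⟨j0, hj0S⟩ := by
    have h1 : 0 < (f j0 y₀)⁻¹ * f j0 x :=
      lt_of_le_of_ne (hclos x hxcl j0 hj0S)
        (Ne.symm (mul_ne_zero (inv_ne_zero (hy₀ j0 hj0S)) hj0ne))
    have h2 : 0 < b ⟨j0, hj0S⟩ :=
      lt_of_le_of_ne (hb _) (Ne.symm (mul_ne_zero (hy₀ j0 hj0S) haj0))
    exact mul_pos h1 h2
  have hpos : 0 < ∑ i : ↥Sx, ((f i.1 y₀)⁻¹ * f i.1 x) * b i :=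
    Finset.sum_pos' (fun i _ => hterm i) ⟨⟨j0, hj0S⟩, Finset.mem_univ _, hj0term⟩
  linarith [hxX'.symm ▸ hpos]

end HypArr
end
end

section
/- Let Δ be an arrangement domain. Then f_0 is bounded from below on Δ if and only if either Δ is bounded, or there exist constants A ∈ ℝ and B > 0 such that f_0(x) ≥ A + B‖x‖ for all x ∈ Δ. -/
open Set MeasureTheory Filter
open scoped Classical Real

noncomputable section

namespace HypArr

variable {k N : ℕ}

open Topology

/-- sign cell characterization of connected components -/
lemma domain_eq_cell (f : Fin N → ((Fin k → ℝ) →ᵃ[ℝ] ℝ)) (x0 : Fin k → ℝ)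
    (h0 : x0 ∈ HypCompl f) :
    connectedComponentIn (HypCompl f) x0 =
      {x | ∀ j, 0 < (if 0 < f j x0 then (1:ℝ) else -1) * f j x} := by
  set ε : Fin N → ℝ := fun j => if 0 < f j x0 then (1:ℝ) else -1 with hεdef
  have hε : ∀ j, ε j = 1 ∨ ε j = -1 := fun j => by
    by_cases h : 0 < f j x0 <;> simp [hεdef, h]
  have hεne : ∀ j, ε j ≠ 0 := fun j => by rcases hε j with h | h <;> rw [h] <;> norm_num
  have hx0 : ∀ j, 0 < ε j * f j x0 := by
    intro j
    by_cases h : 0 < f j x0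
    · simp [hεdef, h]
    · have h1 : f j x0 ≠ 0 := h0 j
      have h2 : f j x0 < 0 := lt_of_le_of_ne (not_lt.mp h) h1
      simp only [hεdef, if_neg h]
      nlinarith
  have hsub : {x | ∀ j, 0 < ε j * f j x} ⊆ HypCompl f := by
    intro x hx j hj
    have := hx j
    rw [hj, mul_zero] at this
    exact lt_irrefl _ this
  have hconv : Convex ℝ {x | ∀ j, 0 < ε j * f j x} := by
    have heq : {x : Fin k → ℝ | ∀ j, 0 < ε j * f j x} = ⋂ j, {x | 0 < ε j * f j x} := by
      ext x; simp [mem_iInter]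
    rw [heq]
    refine convex_iInter fun j => ?_
    rcases hε j with h | h
    · have : {x : Fin k → ℝ | 0 < ε j * f j x} = (f j) ⁻¹' (Ioi 0) := by
        ext x; simp [h]
      rw [this]; exact (convex_Ioi (0:ℝ)).affine_preimage (f j)
    · have : {x : Fin k → ℝ | 0 < ε j * f j x} = (f j) ⁻¹' (Iio 0) := by
        ext x
        simp only [mem_setOf_eq, mem_preimage, mem_Iio, h]
        constructor <;> intro <;> linarith
      rw [this]; exact (convex_Iio (0:ℝ)).affine_preimage (f j)
  apply Subset.antisymm
  · intro y hy j
    by_contra hneg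
    have hy' : y ∈ HypCompl f := connectedComponentIn_subset _ _ hy
    have hylt : ε j * f j y < 0 :=
      lt_of_le_of_ne (not_lt.mp hneg) (mul_ne_zero (hεne j) (hy' j))
    have hpc : IsPreconnected (connectedComponentIn (HypCompl f) x0) :=
      isPreconnected_connectedComponentIn
    have hx0mem : x0 ∈ connectedComponentIn (HypCompl f) x0 := mem_connectedComponentIn h0
    have hcont : ContinuousOn (fun x => ε j * f j x)
        (connectedComponentIn (HypCompl f) x0) :=
      (continuous_const.mul (f j).continuous_of_finiteDimensional).continuousOn
    have h0mem : (0:ℝ) ∈ Icc (ε j * f j y) (ε j * f j x0) := ⟨hylt.le, (hx0 j).le⟩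
    obtain ⟨z, hz, hz0⟩ := hpc.intermediate_value hy hx0mem hcont h0mem
    have hz' : z ∈ HypCompl f := connectedComponentIn_subset _ _ hz
    exact hz' j (by
      rcases mul_eq_zero.mp hz0 with h | h
      · exact absurd h (hεne j)
      · exact h)
  · exact hconv.isPreconnected.subset_connectedComponentIn hx0 hsub

/-- any k of the linear parts have trivial common kernel -/
lemma lin_ker_trivial (f : Fin N → ((Fin k → ℝ) →ᵃ[ℝ] ℝ))
    (hf : ∀ S : Finset (Fin N), S.card = k → ∃! x : Fin k → ℝ, ∀ j ∈ S, f j x = 0)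
    (S : Finset (Fin N)) (hS : S.card = k) (v : Fin k → ℝ)
    (hv : ∀ j ∈ S, (f j).linear v = 0) : v = 0 := by
  obtain ⟨x, hx, huniq⟩ := hf S hS
  have h2 : ∀ j ∈ S, f j (v + x) = 0 := by
    intro j hj
    have : f j (v +ᵥ x) = (f j).linear v +ᵥ f j x := (f j).map_vadd x v
    simp only [vadd_eq_add] at this
    rw [this, hv j hj, hx j hj, add_zero]
  have := huniq (v + x) h2
  have h3 : v + x = x := this
  simpa using congrArg (fun y => y - x) h3

lemma lin_ker_trivial_all (hkN : k ≤ N) (f : Fin N → ((Fin k → ℝ) →ᵃ[ℝ] ℝ))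
    (hf : ∀ S : Finset (Fin N), S.card = k → ∃! x : Fin k → ℝ, ∀ j ∈ S, f j x = 0)
    (v : Fin k → ℝ) (hv : ∀ j, (f j).linear v = 0) : v = 0 := by
  obtain ⟨S, -, hScard⟩ := Finset.exists_subset_card_eq
    (show k ≤ (Finset.univ : Finset (Fin N)).card by simpa using hkN)
  exact lin_ker_trivial f hf S hScard v (fun j _ => hv j)

/-- dimension ≤ 1: common kernel of k-1 forms is at most a line -/
lemma ker_dim_le_one (hk : 1 ≤ k) (hkN : k ≤ N) (f : Fin N → ((Fin k → ℝ) →ᵃ[ℝ] ℝ))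
    (hf : ∀ S : Finset (Fin N), S.card = k → ∃! x : Fin k → ℝ, ∀ j ∈ S, f j x = 0)
    (U : Finset (Fin N)) (hU : U.card = k - 1) (v d : Fin k → ℝ)
    (hvU : ∀ j ∈ U, (f j).linear v = 0) (hdU : ∀ j ∈ U, (f j).linear d = 0)
    (hd : d ≠ 0) : ∃ c : ℝ, v = c • d := by
  have hj' : ∃ j : Fin N, j ∉ U := by
    by_contra h
    push_neg at h
    have : U = Finset.univ := Finset.eq_univ_iff_forall.mpr h
    rw [this] at hU
    simp only [Finset.card_univ, Fintype.card_fin] at hU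
    omega
  obtain ⟨j₀, hj₀⟩ := hj'
  set S : Finset (Fin N) := insert j₀ U with hSdef
  have hScard : S.card = k := by
    rw [hSdef, Finset.card_insert_of_notMem hj₀, hU]; omega
  have hd0 : (f j₀).linear d ≠ 0 := by
    intro h
    apply hd
    refine lin_ker_trivial f hf S hScard d ?_
    intro j hj
    rcases Finset.mem_insert.mp hj with h' | h'
    · rw [h']; exact h
    · exact hdU j h'
  set u : Fin k → ℝ := ((f j₀).linear d) • v - ((f j₀).linear v) • d with hudef
  have hu : u = 0 := by
    refine lin_ker_trivial f hf S hScard u ?_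
    intro j hj
    rw [hudef, map_sub, LinearMap.map_smul, LinearMap.map_smul, smul_eq_mul, smul_eq_mul]
    rcases Finset.mem_insert.mp hj with h' | h'
    · subst h'; ring
    · rw [hvU j h', hdU j h']; ring
  refine ⟨((f j₀).linear v) / ((f j₀).linear d), ?_⟩
  have h1 : ((f j₀).linear d) • v = ((f j₀).linear v) • d := by
    have := sub_eq_zero.mp hu
    exact this
  calc v = (((f j₀).linear d)⁻¹ * ((f j₀).linear d)) • v := by
        rw [inv_mul_cancel₀ hd0, one_smul]
    _ = ((f j₀).linear d)⁻¹ • (((f j₀).linear d) • v) := by rw [mul_smul]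
    _ = ((f j₀).linear d)⁻¹ • (((f j₀).linear v) • d) := by rw [h1]
    _ = (((f j₀).linear v) / ((f j₀).linear d)) • d := by
        rw [smul_smul, div_eq_inv_mul, mul_comm]


/-- perturbation: if v satisfies all sign constraints (weakly) and w vanishes on the
active ones, then v + t•w still satisfies all constraints for |t| small -/
lemma perturb (hN : 0 < N) (f : Fin N → ((Fin k → ℝ) →ᵃ[ℝ] ℝ)) (ε : Fin N → ℝ)
    (hε : ∀ j, ε j = 1 ∨ ε j = -1)
    (v w : Fin k → ℝ)
    (hv : ∀ j, 0 ≤ ε j * (f j).linear v)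
    (hw : ∀ j, (f j).linear v = 0 → (f j).linear w = 0) :
    ∃ s : ℝ, 0 < s ∧ ∀ t : ℝ, |t| ≤ s → ∀ j, 0 ≤ ε j * (f j).linear (v + t • w) := by
  have hne : (Finset.univ : Finset (Fin N)).Nonempty := by
    simpa [Finset.univ_nonempty_iff] using Fin.pos_iff_nonempty.mp hN
  have hεabs : ∀ j, |ε j| = 1 := fun j => by rcases hε j with h | h <;> rw [h] <;> norm_num
  set g : Fin N → ℝ := fun j =>
    (ε j * (f j).linear v + if (f j).linear v = 0 then 1 else 0) / (|(f j).linear w| + 1)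
    with hgdef
  have hgpos : ∀ j, 0 < g j := by
    intro j
    apply div_pos
    · by_cases h : (f j).linear v = 0
      · simp [h]
      · have h1 : ε j * (f j).linear v ≠ 0 := mul_ne_zero (by
          rcases hε j with h' | h' <;> rw [h'] <;> norm_num) h
        have h2 : 0 < ε j * (f j).linear v := lt_of_le_of_ne (hv j) (Ne.symm h1)
        simp only [if_neg h]
        linarith
    · positivity
  refine ⟨Finset.univ.inf' hne g, ?_, ?_⟩
  · exact (Finset.lt_inf'_iff hne).mpr fun j _ => hgpos j
  · intro t ht j
    rw [map_add, LinearMap.map_smul, smul_eq_mul, mul_add]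
    by_cases h : (f j).linear v = 0
    · rw [h, mul_zero, hw j h, mul_zero, mul_zero, add_zero]
    · have h2 : 0 < ε j * (f j).linear v := lt_of_le_of_ne (hv j)
        (Ne.symm (mul_ne_zero (by rcases hε j with h' | h' <;> rw [h'] <;> norm_num) h))
    -- |t * stuff| ≤ s * (|lw|+1) ≤ ε l v
      have hsle : Finset.univ.inf' hne g ≤ g j := Finset.inf'_le _ (Finset.mem_univ j)
      have habs : |ε j * (t * (f j).linear w)| ≤ ε j * (f j).linear v := by
        rw [abs_mul, abs_mul, hεabs j, one_mul]
        have h3 : |t| * |(f j).linear w| ≤ g j * (|(f j).linear w| + 1) := by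
          have : |t| ≤ g j := le_trans ht hsle
          nlinarith [abs_nonneg ((f j).linear w), abs_nonneg t]
        have h4 : g j * (|(f j).linear w| + 1) = ε j * (f j).linear v := by
          rw [hgdef]
          simp only [if_neg h]
          rw [add_zero]
          field_simp
        linarith
      have := neg_abs_le (ε j * (t * (f j).linear w))
      linarith

/-- THE key lemma: any direction in the recession cone on which f0 vanishes is zero -/
lemma cone_pos (hk : 1 ≤ k) (hkN : k ≤ N) (f : Fin N → ((Fin k → ℝ) →ᵃ[ℝ] ℝ))
    (hf : ∀ S : Finset (Fin N), S.card = k → ∃! x : Fin k → ℝ, ∀ j ∈ S, f j x = 0)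
    (f0 : (Fin k → ℝ) →ₗ[ℝ] ℝ)
    (hf0 : ∀ U : Finset (Fin N), U.card = k - 1 →
      ∃ x y : Fin k → ℝ, (∀ j ∈ U, f j x = 0) ∧ (∀ j ∈ U, f j y = 0) ∧ f0 x ≠ f0 y)
    (ε : Fin N → ℝ) (hε : ∀ j, ε j = 1 ∨ ε j = -1)
    (hpos : ∀ v, (∀ j, 0 ≤ ε j * (f j).linear v) → 0 ≤ f0 v) :
    ∀ m : ℕ, ∀ v : Fin k → ℝ, (∀ j, 0 ≤ ε j * (f j).linear v) → f0 v = 0 →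
      N ≤ m + (Finset.univ.filter fun j => (f j).linear v = 0).card → v = 0 := by
  have hN : 0 < N := lt_of_lt_of_le hk hkN
  intro m
  induction m with
  | zero =>
    intro v hvC hv0 hcard
    -- card ≥ N ≥ k : pick S of card k inside J v
    simp only [Nat.zero_add] at hcard
    have hsub : k ≤ (Finset.univ.filter fun j => (f j).linear v = 0).card :=
      le_trans hkN hcard
    obtain ⟨S, hSsub, hScard⟩ := Finset.exists_subset_card_eq hsub
    exact lin_ker_trivial f hf S hScard v fun j hj =>
      (Finset.mem_filter.mp (hSsub hj)).2
  | succ m IH =>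
    intro v hvC hv0 hcard
    by_cases hv : v = 0
    · exact hv
    set J : Finset (Fin N) := Finset.univ.filter fun j => (f j).linear v = 0 with hJdef
    by_cases h1 : k ≤ J.card
    · obtain ⟨S, hSsub, hScard⟩ := Finset.exists_subset_card_eq h1
      exact lin_ker_trivial f hf S hScard v fun j hj =>
        (Finset.mem_filter.mp (hSsub hj)).2
    by_cases h2 : J.card = k - 1
    · -- use genericity of f0 on lines
      obtain ⟨x, y, hx, hy, hxy⟩ := hf0 J h2
      set d : Fin k → ℝ := x - y with hddef
      have hdlin : ∀ j ∈ J, (f j).linear d = 0 := by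
        intro j hj
        have h3 : f j ((x - y) +ᵥ y) = (f j).linear (x - y) +ᵥ f j y := (f j).map_vadd y (x - y)
        simp only [vadd_eq_add, sub_add_cancel] at h3
        rw [hx j hj, hy j hj] at h3
        have h4 : (f j).linear x - (f j).linear y = 0 := by
          have := h3.symm
          simp only [map_sub] at this ⊢
          linarith [this]
        rw [hddef, map_sub]
        exact h4
      have hd0 : f0 d ≠ 0 := by
        rw [hddef, map_sub]
        intro h
        exact hxy (by linarith [sub_eq_zero.mp h])
      have hdne : d ≠ 0 := fun h => hd0 (by rw [h, map_zero])
      obtain ⟨c, hc⟩ := ker_dim_le_one hk hkN f hf J h2 v d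
        (fun j hj => (Finset.mem_filter.mp hj).2) hdlin hdne
      have : c = 0 := by
        have := hv0
        rw [hc, LinearMap.map_smul, smul_eq_mul] at this
        rcases mul_eq_zero.mp this with h | h
        · exact h
        · exact absurd h hd0
      rw [hc, this, zero_smul]
    -- now J.card + 2 ≤ k
    have h3 : J.card + 2 ≤ k := by omega
    by_cases h4 : ∃ w : Fin k → ℝ, (∀ j ∈ J, (f j).linear w = 0) ∧ f0 w ≠ 0
    · -- perturb to make f0 negative: contradiction with hpos
      obtain ⟨w, hwJ, hw0⟩ := h4
      obtain ⟨s, hs, hpert⟩ := perturb hN f ε hε v w hvC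
        (fun j hj => hwJ j (Finset.mem_filter.mpr ⟨Finset.mem_univ j, hj⟩))
      set t : ℝ := if 0 < f0 w then -s else s with htdef
      have hts : |t| ≤ s := by
        rw [htdef]
        split
        · rw [abs_neg, abs_of_pos hs]
        · rw [abs_of_pos hs]
      have hneg : f0 (v + t • w) < 0 := by
        rw [map_add, LinearMap.map_smul, smul_eq_mul, hv0, zero_add]
        rcases lt_trichotomy (f0 w) 0 with h | h | h
        · have ht' : t = s := by rw [htdef, if_neg (by linarith)]
          rw [ht']; nlinarith
        · exact absurd h hw0
        · have ht' : t = -s := by rw [htdef, if_pos h]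
          rw [ht']; nlinarith
      exact absurd (hpos _ (hpert t hts)) (not_le.mpr hneg)
    · -- f0 vanishes on the whole common kernel W; move to the boundary
      push_neg at h4
      -- W as kernel of pi map
      set g : (Fin k → ℝ) →ₗ[ℝ] (J → ℝ) := LinearMap.pi (fun j => (f j.1).linear) with hgdef
      have hgker : ∀ z : Fin k → ℝ, z ∈ LinearMap.ker g ↔ ∀ j ∈ J, (f j).linear z = 0 := by
        intro z
        rw [LinearMap.mem_ker, hgdef]
        constructor
        · intro h j hj
          exact congrFun h ⟨j, hj⟩
        · intro h
          funext j
          exact h j.1 j.2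
      have hvker : v ∈ LinearMap.ker g := (hgker v).mpr
        (fun j hj => (Finset.mem_filter.mp hj).2)
      have hrank : 2 ≤ Module.finrank ℝ (LinearMap.ker g) := by
        have hr1 := LinearMap.finrank_range_add_finrank_ker g
        have hr2 : Module.finrank ℝ (LinearMap.range g) ≤ J.card := by
          have := Submodule.finrank_le (LinearMap.range g)
          rw [Module.finrank_fintype_fun_eq_card] at this
          simpa [Fintype.card_coe] using this
        have hr3 : Module.finrank ℝ (Fin k → ℝ) = k := by
          simp [Module.finrank_fintype_fun_eq_card]
        omega
      have hnotle : ¬ (LinearMap.ker g ≤ Submodule.span ℝ {v}) := by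
        intro hle
        have := Submodule.finrank_mono hle
        rw [finrank_span_singleton hv] at this
        omega
      obtain ⟨w0, hw0ker, hw0span⟩ := SetLike.not_le_iff_exists.mp hnotle
      clear hnotle
      -- E t = sign conditions for v + t w
      set E : (Fin k → ℝ) → Set ℝ := fun w =>
        {t : ℝ | 0 ≤ t ∧ ∀ j, 0 ≤ ε j * ((f j).linear v + t * (f j).linear w)} with hEdef
      have hEclosed : ∀ w, IsClosed (E w) := by
        intro w
        have : E w = Ici 0 ∩ ⋂ j, (fun t => ε j * ((f j).linear v + t * (f j).linear w)) ⁻¹'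
            (Ici 0) := by
          ext t; simp [hEdef, mem_iInter]
        rw [this]
        exact isClosed_Ici.inter (isClosed_iInter fun j =>
          IsClosed.preimage (by fun_prop) isClosed_Ici)
      have hE0 : ∀ w, (0:ℝ) ∈ E w := by
        intro w
        refine ⟨le_refl 0, fun j => ?_⟩
        simpa using hvC j
      -- if both E w0 and E (-w0) unbounded, w0 = 0
      have hbdd_aux : ∀ w : Fin k → ℝ, ¬ BddAbove (E w) → ∀ j, 0 ≤ ε j * (f j).linear w := by
        intro w hb j
        by_contra hlt
        push_neg at hlt
        have hlt' : ε j * (f j).linear w < 0 := hlt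
        apply hb
        refine ⟨(ε j * (f j).linear v) / (-(ε j * (f j).linear w)), ?_⟩
        rintro t ⟨ht0, htj⟩
        have := htj j
        rw [le_div_iff₀ (by linarith)]
        nlinarith
      have hw0exists : ∃ w : Fin k → ℝ, w ∈ LinearMap.ker g ∧ w ∉ Submodule.span ℝ {v} ∧
          BddAbove (E w) := by
        by_cases hb : BddAbove (E w0)
        · exact ⟨w0, hw0ker, hw0span, hb⟩
        · refine ⟨-w0, neg_mem hw0ker, fun h => hw0span (by simpa using neg_mem h), ?_⟩
          by_contra hb2
          have ha := hbdd_aux w0 hb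
          have hb' := hbdd_aux (-w0) hb2
          have hz : ∀ j, (f j).linear w0 = 0 := by
            intro j
            have h1 := ha j
            have h2 := hb' j
            rw [map_neg, mul_neg] at h2
            have h3 : ε j * (f j).linear w0 = 0 := le_antisymm (by linarith) h1
            rcases mul_eq_zero.mp h3 with h | h
            · rcases hε j with h' | h' <;> rw [h'] at h <;> norm_num at h
            · exact h
          exact hw0span (by rw [lin_ker_trivial_all hkN f hf w0 hz]; exact zero_mem _)
      obtain ⟨w, hwker, hwspan, hwbdd⟩ := hw0exists
      have hwJ : ∀ j ∈ J, (f j).linear w = 0 := (hgker w).mp hwker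
      set T : ℝ := sSup (E w) with hTdef
      have hTmem : T ∈ E w := (hEclosed w).csSup_mem ⟨0, hE0 w⟩ hwbdd
      set v' : Fin k → ℝ := v + T • w with hv'def
      have hv'lin : ∀ j, (f j).linear v' = (f j).linear v + T * (f j).linear w := by
        intro j; rw [hv'def, map_add, LinearMap.map_smul, smul_eq_mul]
      have hv'C : ∀ j, 0 ≤ ε j * (f j).linear v' := by
        intro j; rw [hv'lin j]; exact hTmem.2 j
      have hv'0 : f0 v' = 0 := by
        rw [hv'def, map_add, LinearMap.map_smul, smul_eq_mul, hv0,
          h4 w hwJ, mul_zero, add_zero]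
      -- there must be a new active constraint at v'
      have hnew : ∃ j₀, (f j₀).linear v' = 0 ∧ (f j₀).linear v ≠ 0 := by
        by_contra hno
        push_neg at hno
        obtain ⟨s, hs, hpert⟩ := perturb hN f ε hε v' w hv'C (by
          intro j hj
          by_cases h : (f j).linear v = 0
          · exact hwJ j (Finset.mem_filter.mpr ⟨Finset.mem_univ j, h⟩)
          · exact absurd (hno j hj) h)
        have hTs : T + s ∈ E w := by
          refine ⟨by linarith [hTmem.1], fun j => ?_⟩
          have := hpert s (by rw [abs_of_pos hs]) j
          rw [map_add, LinearMap.map_smul, smul_eq_mul, hv'lin j] at this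
          calc (0:ℝ) ≤ ε j * ((f j).linear v + T * (f j).linear w
              + s * (f j).linear w) := this
            _ = ε j * ((f j).linear v + (T + s) * (f j).linear w) := by ring
        have := le_csSup hwbdd hTs
        rw [← hTdef] at this
        linarith
      obtain ⟨j₀, hj₀v', hj₀v⟩ := hnew
      -- J v' strictly contains J
      set J' : Finset (Fin N) := Finset.univ.filter fun j => (f j).linear v' = 0 with hJ'def
      have hJsub : J ⊆ J' := by
        intro j hj
        have h5 := (Finset.mem_filter.mp hj).2
        refine Finset.mem_filter.mpr ⟨Finset.mem_univ j, ?_⟩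
        rw [hv'lin j, h5, hwJ j hj, mul_zero, add_zero]
      have hJssub : J ⊂ J' := (Finset.ssubset_iff_of_subset hJsub).mpr
        ⟨j₀, Finset.mem_filter.mpr ⟨Finset.mem_univ j₀, hj₀v'⟩,
         fun h => hj₀v (Finset.mem_filter.mp h).2⟩
      have hcard' : J.card < J'.card := Finset.card_lt_card hJssub
      have hv'eq : v' = 0 := IH v' hv'C hv'0 (by
        rw [← hJ'def]
        have : N ≤ m + 1 + J.card := hcard
        omega)
      -- but v' = 0 is impossible
      exfalso
      have hT0 : T ≠ 0 := by
        intro h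
        rw [h, zero_smul, add_zero] at hv'def
        exact hv (by rw [← hv'def]; exact hv'eq)
      apply hwspan
      rw [Submodule.mem_span_singleton]
      refine ⟨-T⁻¹, ?_⟩
      have hTw : T • w = -v := by
        have h6 : T • w + v = 0 := by
          rw [add_comm]
          rw [← hv'def]
          exact hv'eq
        exact add_eq_zero_iff_eq_neg.mp h6
      calc (-T⁻¹) • v = T⁻¹ • (-v) := by rw [neg_smul, smul_neg]
        _ = T⁻¹ • (T • w) := by rw [hTw]
        _ = w := by rw [smul_smul, inv_mul_cancel₀ hT0, one_smul]

lemma sqrt_sum_sq_le (x : Fin k → ℝ) :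
    Real.sqrt (∑ i, x i ^ 2) ≤ Real.sqrt k * ‖x‖ := by
  have h1 : ∑ i, x i ^ 2 ≤ (k:ℝ) * ‖x‖^2 := by
    calc ∑ i, x i ^ 2 ≤ ∑ _i : Fin k, ‖x‖^2 := by
          refine Finset.sum_le_sum fun i _ => ?_
          have h2 : |x i| ≤ ‖x‖ := by simpa [Real.norm_eq_abs] using norm_le_pi_norm x i
          nlinarith [abs_nonneg (x i), sq_abs (x i)]
      _ = (k:ℝ) * ‖x‖^2 := by
          rw [Finset.sum_const, Finset.card_univ, Fintype.card_fin, nsmul_eq_mul]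
  calc Real.sqrt (∑ i, x i ^ 2) ≤ Real.sqrt ((k:ℝ) * ‖x‖^2) := Real.sqrt_le_sqrt h1
    _ = Real.sqrt k * ‖x‖ := by
        rw [Real.sqrt_mul (by positivity), Real.sqrt_sq (norm_nonneg _)]

set_option maxHeartbeats 1000000 in
theorem stmt_10' {k N : ℕ} (hk : 1 ≤ k) (hkN : k ≤ N)
    (f : Fin N → ((Fin k → ℝ) →ᵃ[ℝ] ℝ)) (hfu : ∀ S : Finset (Fin N), S.card = k → ∃! x : Fin k → ℝ, ∀ j ∈ S, f j x = 0)
    (f0 : (Fin k → ℝ) →ₗ[ℝ] ℝ)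
    (hf0 : ∀ U : Finset (Fin N), U.card = k - 1 →
      ∃ x y : Fin k → ℝ, (∀ j ∈ U, f j x = 0) ∧ (∀ j ∈ U, f j y = 0) ∧ f0 x ≠ f0 y)
    (Δ : Set (Fin k → ℝ)) (hΔ : ∃ x ∈ HypCompl f, Δ = connectedComponentIn (HypCompl f) x) :
    BddBelow (f0 '' Δ) ↔
      (Bornology.IsBounded Δ ∨
        ∃ A B : ℝ, 0 < B ∧ ∀ x ∈ Δ, A + B * Real.sqrt (∑ i, x i ^ 2) ≤ f0 x) := by
  have hcontf0 : Continuous f0 := f0.continuous_of_finiteDimensional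
  constructor
  · -- forward direction
    intro hbdd
    obtain ⟨x0, hx0m, hΔeq⟩ := hΔ
    set ε : Fin N → ℝ := fun j => if 0 < f j x0 then (1:ℝ) else -1 with hεdef
    have hε : ∀ j, ε j = 1 ∨ ε j = -1 := fun j => by
      by_cases h : 0 < f j x0 <;> simp [hεdef, h]
    have hcell : Δ = {x | ∀ j, 0 < ε j * f j x} := by
      rw [hΔeq]; exact domain_eq_cell f x0 hx0m
    have hx0Δ : x0 ∈ Δ := hΔeq ▸ mem_connectedComponentIn hx0m
    obtain ⟨c, hc⟩ := hbdd
    have hcle : ∀ x ∈ Δ, c ≤ f0 x := fun x hx => hc ⟨x, hx, rfl⟩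
    -- nonnegativity of f0 on the recession cone
    have hpos : ∀ v : Fin k → ℝ, (∀ j, 0 ≤ ε j * (f j).linear v) → 0 ≤ f0 v := by
      intro v hv
      by_contra hneg
      push_neg at hneg
      set t : ℝ := (c - f0 x0 - 1) / f0 v with htdef
      have hc0 : c ≤ f0 x0 := hcle x0 hx0Δ
      have ht : 0 < t := div_pos_of_neg_of_neg (by linarith) hneg
      have hmem : t • v + x0 ∈ Δ := by
        rw [hcell]
        intro j
        have h1 : f j (t • v + x0) = (f j).linear (t • v) + f j x0 := by
          have := (f j).map_vadd x0 (t • v)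
          simpa [vadd_eq_add] using this
        rw [h1, LinearMap.map_smul, smul_eq_mul]
        have h2 : 0 < ε j * f j x0 := by
          have := hcell ▸ hx0Δ
          exact this j
        have h3 : 0 ≤ t * (ε j * (f j).linear v) := mul_nonneg ht.le (hv j)
        nlinarith
      have h4 := hcle _ hmem
      rw [map_add, LinearMap.map_smul, smul_eq_mul] at h4
      rw [htdef] at h4
      rw [div_mul_cancel₀ _ (ne_of_lt hneg)] at h4
      linarith
    -- the kernel fact
    have hker : ∀ v : Fin k → ℝ, (∀ j, 0 ≤ ε j * (f j).linear v) → f0 v = 0 → v = 0 := by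
      intro v hvC hv0
      exact cone_pos hk hkN f hfu f0 hf0 ε hε hpos N v hvC hv0 (by omega)
    -- main contradiction argument
    by_contra hcon
    push_neg at hcon
    obtain ⟨-, hseq⟩ := hcon
    have hchoice : ∀ n : ℕ, ∃ x ∈ Δ, f0 x <
        (c - ((n:ℝ)+1)) + (1/((n:ℝ)+1)) * Real.sqrt (∑ i, x i ^ 2) := by
      intro n
      obtain ⟨x, hx1, hx2⟩ := hseq (c - ((n:ℝ)+1)) (1/((n:ℝ)+1)) (by positivity)
      exact ⟨x, hx1, hx2⟩
    choose x hxΔ hxlt using hchoice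
    set e : ℕ → ℝ := fun n => Real.sqrt (∑ i, x n i ^ 2) with hedef
    set sk : ℝ := Real.sqrt k with hskdef
    have hsk1 : 1 ≤ sk := by
      rw [hskdef, show (1:ℝ) = Real.sqrt 1 by rw [Real.sqrt_one]]
      exact Real.sqrt_le_sqrt (by exact_mod_cast hk)
    have hsk0 : 0 < sk := by linarith
    have hesk : ∀ n, e n ≤ sk * ‖x n‖ := fun n => sqrt_sum_sq_le (x n)
    have hn1 : ∀ n : ℕ, (0:ℝ) < (n:ℝ)+1 := fun n => by positivity
    have hn1' : ∀ n : ℕ, (1:ℝ) ≤ (n:ℝ)+1 := fun n => by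
      have := Nat.cast_nonneg (α := ℝ) n; linarith
    have hεabs : ∀ j, |ε j| = 1 := fun j => by
      rcases hε j with h | h <;> rw [h] <;> norm_num
    have hen : ∀ n : ℕ, ((n:ℝ)+1)^2 ≤ e n := by
      intro n
      have h1 := hxlt n
      have h2 := hcle _ (hxΔ n)
      have h3 : ((n:ℝ)+1) < 1/((n:ℝ)+1) * e n := by linarith
      have h4 := mul_lt_mul_of_pos_left h3 (hn1 n)
      have h5 : ((n:ℝ)+1) * (1/((n:ℝ)+1) * e n) = e n := by field_simp
      rw [h5] at h4
      nlinarith [h4]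
    have hrpos : ∀ n, 0 < ‖x n‖ := by
      intro n
      have h1 : (1:ℝ) ≤ e n := le_trans (by nlinarith [hn1' n]) (hen n)
      have h2 := hesk n
      rcases (norm_nonneg (x n)).lt_or_eq with h | h
      · exact h
      · exfalso; rw [← h, mul_zero] at h2; linarith
    set u : ℕ → Fin k → ℝ := fun n => ‖x n‖⁻¹ • x n with hudef
    have hunorm : ∀ n, ‖u n‖ = 1 := by
      intro n
      simp only [hudef]
      rw [norm_smul, norm_inv, norm_norm, inv_mul_cancel₀ (ne_of_gt (hrpos n))]
    have husphere : ∀ n, u n ∈ Metric.sphere (0 : Fin k → ℝ) 1 :=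
      fun n => mem_sphere_zero_iff_norm.mpr (hunorm n)
    obtain ⟨z, hzs, φ, hφ, hlim⟩ :=
      (isCompact_sphere (0 : Fin k → ℝ) 1).tendsto_subseq husphere
    have hφtop : Tendsto φ atTop atTop := hφ.tendsto_atTop
    have htend : ∀ Cst : ℝ, Tendsto (fun n => Cst / ((φ n : ℝ)+1)) atTop (𝓝 0) := by
      intro Cst
      have h1 : Tendsto (fun m : ℕ => Cst / ((m:ℝ)+1)) atTop (𝓝 0) := by
        have h0 : (fun m : ℕ => Cst / ((m:ℝ)+1)) = (fun m : ℕ => Cst / ((m+1 : ℕ):ℝ)) := by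
          funext m; push_cast; ring
        rw [h0]
        exact (tendsto_const_div_atTop_nhds_zero_nat Cst).comp (tendsto_add_atTop_nat 1)
      exact h1.comp hφtop
    set M : ℝ := max c 0 with hMdef
    have hM0 : 0 ≤ M := le_max_right _ _
    have hMc : c ≤ M := le_max_left _ _
    set D : ℝ := sk * (M + 1) with hDdef
    have hxr : ∀ n, x n = ‖x n‖ • u n := by
      intro n
      simp only [hudef]
      rw [smul_smul, mul_inv_cancel₀ (ne_of_gt (hrpos n)), one_smul]
    have hA2 : ∀ n : ℕ, ((n:ℝ)+1) ≤ sk * ‖x n‖ := by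
      intro n
      nlinarith [hen n, hesk n, hn1' n]
    have hfubd : ∀ n : ℕ, f0 (u n) ≤ D / ((n:ℝ)+1) := by
      intro n
      have hfeq : f0 (u n) = (‖x n‖)⁻¹ * f0 (x n) := by
        simp only [hudef]
        rw [LinearMap.map_smul, smul_eq_mul]
      have key : f0 (x n) * ((n:ℝ)+1) ≤ D * ‖x n‖ := by
        have hid : (c - ((n:ℝ)+1) + 1/((n:ℝ)+1) * e n) * ((n:ℝ)+1)
            = c*((n:ℝ)+1) - ((n:ℝ)+1)^2 + e n := by field_simp
        have A1 : f0 (x n) * ((n:ℝ)+1) < c*((n:ℝ)+1) - ((n:ℝ)+1)^2 + e n := by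
          calc f0 (x n) * ((n:ℝ)+1) < _ := mul_lt_mul_of_pos_right (hxlt n) (hn1 n)
            _ = _ := hid
        have A3 : M * ((n:ℝ)+1) ≤ M * (sk * ‖x n‖) := mul_le_mul_of_nonneg_left (hA2 n) hM0
        have A4 : c * ((n:ℝ)+1) ≤ M * ((n:ℝ)+1) :=
          mul_le_mul_of_nonneg_right hMc (by linarith [hn1 n])
        have A5 : e n ≤ sk * ‖x n‖ := hesk n
        have hDr : D * ‖x n‖ = M * (sk * ‖x n‖) + sk * ‖x n‖ := by rw [hDdef]; ring
        nlinarith [sq_nonneg ((n:ℝ)+1)]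
      rw [hfeq, inv_mul_eq_div, div_le_div_iff₀ (hrpos n) (hn1 n)]
      linarith [key]
    have hf0z : f0 z ≤ 0 := by
      have ht1 : Tendsto (fun n => f0 (u (φ n))) atTop (𝓝 (f0 z)) :=
        (hcontf0.tendsto z).comp hlim
      exact le_of_tendsto_of_tendsto' ht1 (htend D) (fun n => hfubd (φ n))
    have hzC : ∀ j, 0 ≤ ε j * (f j).linear z := by
      intro j
      have hB0 : (0:ℝ) ≤ |f j 0| := abs_nonneg _
      have hlow : ∀ n : ℕ, -(|f j 0| * sk) / ((n:ℝ)+1) ≤ ε j * (f j).linear (u n) := by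
        intro n
        have hfx : f j (x n) = (f j).linear (x n) + f j 0 := by
          have := (f j).map_vadd 0 (x n)
          simpa [vadd_eq_add] using this
        have hxmem : ∀ j', 0 < ε j' * f j' (x n) := by
          have := hxΔ n; rw [hcell] at this; exact this
        have h1 : 0 < ε j * f j (x n) := hxmem j
        have hlu : (f j).linear (x n) = ‖x n‖ * (f j).linear (u n) := by
          conv_lhs => rw [hxr n]
          rw [LinearMap.map_smul, smul_eq_mul]
        rw [hfx, hlu] at h1
        have h2 : ε j * f j 0 ≤ |f j 0| := by
          calc ε j * f j 0 ≤ |ε j * f j 0| := le_abs_self _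
            _ = |f j 0| := by rw [abs_mul, hεabs j, one_mul]
        have key2 : -(|f j 0|) ≤ ‖x n‖ * (ε j * (f j).linear (u n)) := by nlinarith [h1, h2]
        rw [div_le_iff₀ (hn1 n)]
        rcases le_or_gt 0 (ε j * (f j).linear (u n)) with hX | hX
        · nlinarith [mul_nonneg hB0 hsk0.le, mul_nonneg hX (le_of_lt (hn1 n))]
        · have h5 : sk * (-(|f j 0|)) ≤ sk * (‖x n‖ * (ε j * (f j).linear (u n))) :=
            mul_le_mul_of_nonneg_left key2 hsk0.le
          have h6 : (sk * ‖x n‖) * (ε j * (f j).linear (u n))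
              ≤ ((n:ℝ)+1) * (ε j * (f j).linear (u n)) :=
            mul_le_mul_of_nonpos_right (hA2 n) hX.le
          nlinarith [h5, h6]
      have ht1 : Tendsto (fun n => ε j * (f j).linear (u (φ n))) atTop
          (𝓝 (ε j * (f j).linear z)) :=
        ((continuous_const.mul
          ((f j).linear.continuous_of_finiteDimensional)).tendsto z).comp hlim
      exact le_of_tendsto_of_tendsto' (htend (-(|f j 0| * sk))) ht1 (fun n => hlow (φ n))
    have hz0 : z = 0 := hker z hzC (le_antisymm hf0z (hpos z hzC))
    have hzn : ‖z‖ = 1 := mem_sphere_zero_iff_norm.mp hzs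
    rw [hz0] at hzn
    simp at hzn
  · -- backward direction
    rintro (hbdd | ⟨A, B, hB, hAB⟩)
    · obtain ⟨R, hR⟩ := isBounded_iff_forall_norm_le.mp hbdd
      set F := LinearMap.toContinuousLinearMap f0 with hFdef
      refine ⟨-(‖F‖ * max R 0), ?_⟩
      rintro y ⟨z, hz, rfl⟩
      have h1 : ‖F z‖ ≤ ‖F‖ * ‖z‖ := F.le_opNorm z
      have h2 : ‖z‖ ≤ max R 0 := le_trans (hR z hz) (le_max_left _ _)
      have h3 : ‖F‖ * ‖z‖ ≤ ‖F‖ * max R 0 := mul_le_mul_of_nonneg_left h2 (norm_nonneg F)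
      have h4 : F z = f0 z := rfl
      have h5 : |f0 z| ≤ ‖F‖ * max R 0 := by
        rw [← h4]
        calc |F z| = ‖F z‖ := (Real.norm_eq_abs _).symm
          _ ≤ _ := le_trans h1 h3
      linarith [neg_abs_le (f0 z)]
    · refine ⟨A, ?_⟩
      rintro y ⟨z, hz, rfl⟩
      have h1 := hAB z hz
      have h2 : 0 ≤ Real.sqrt (∑ i, z i ^ 2) := Real.sqrt_nonneg _
      nlinarith


/-- an arrangement domain `Δ` has `f0` bounded from below iff either `Δ`
is bounded or there are `A ∈ ℝ` and `B > 0` with `f0 x ≥ A + B‖x‖` on `Δ`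
(`‖·‖` the Euclidean norm). -/
theorem stmt_10 {k N : ℕ} (hk : 1 ≤ k) (hkN : k ≤ N)
    (f : Fin N → ((Fin k → ℝ) →ᵃ[ℝ] ℝ)) (hf : Generic f)
    (f0 : (Fin k → ℝ) →ₗ[ℝ] ℝ) (hf0 : GenericLin f f0)
    (Δ : Set (Fin k → ℝ)) (hΔ : IsDomain f Δ) :
    BddBelow (f0 '' Δ) ↔
      (Bornology.IsBounded Δ ∨
        ∃ A B : ℝ, 0 < B ∧ ∀ x ∈ Δ, A + B * Real.sqrt (∑ i, x i ^ 2) ≤ f0 x) := by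
  exact stmt_10' hk hkN f hf.2.1 f0 hf0.2 Δ hΔ

end HypArr
end
end
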